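/- arXiv:1105.2732 — 10 statements merged into one kernel-verified Lean document; each statement's English description precedes it below -/
import Mathlib

section
/- Let M be an infinite subset of ℕ and k, l ∈ ℕ. Then for every finite partition Plm_l([M]^k) = ⋃_{j=1}^p P_j of the set of plegma families of length l in [M]^k, there exist an infinite subset L of M and 1 ≤ j_0 ≤ p such that Plm_l([L]^k) ⊆ P_{j_0}. -/
/-!
Listing the entries of a plegma family `(s_j)_{j ≤ l}` in the order
`s_1(1), …, s_l(1), s_1(2), …, s_l(k)` gives an increasing `kl`-tuple, and every increasing
`kl`-tuple arises in this way from exactly one plegma family. So colouring plegma families of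
length `l` in `[M]^k` is colouring `[M]^{kl}`, and the theorem is the infinite Ramsey theorem.
That one is proved by induction on the dimension: choose `x₀ < x₁ < ⋯` and shrinking infinite
sets `S₀ ⊇ S₁ ⊇ ⋯` such that the colour of `{xᵢ} ∪ t` for `t ⊆ Sᵢ₊₁` depends only on `i`,
then pass to an infinite set of indices `i` with the same colour.
-/

/-- `s : Fin k → ℕ` is the increasing enumeration of a `k`-element subset of `M`. -/
def IsEnum (M : Set ℕ) {k : ℕ} (s : Fin k → ℕ) : Prop :=
  StrictMono s ∧ ∀ i, s i ∈ M

/-- `(p j)_{j=1,…,l}` is a plegma family in `[M]^k`. -/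
def IsPlegma (M : Set ℕ) {k l : ℕ} (p : Fin l → Fin k → ℕ) : Prop :=
  (∀ j, IsEnum M (p j)) ∧
  (∀ i : Fin k, StrictMono fun j : Fin l => p j i) ∧
  (∀ (i : Fin k) (hi : (i : ℕ) + 1 < k) (j j' : Fin l), p j i < p j' ⟨(i : ℕ) + 1, hi⟩)

theorem Set.Infinite.sep_lt {α : Type*} [LinearOrder α] [LocallyFiniteOrderBot α] {S : Set α}
    (hS : S.Infinite) (x : α) : {y ∈ S | x < y}.Infinite :=
  (hS.sdiff (Set.finite_Iic x)).mono fun _ hy => ⟨hy.1, not_le.mp hy.2⟩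

/-- The diagonal step of Ramsey's theorem, with `Q x T a` read as "every finite set with
minimum `x` and all other elements in `T` has colour `a`". -/
theorem Set.Infinite.exists_infinite_subset_forall_diag {α : Type*} [Finite α]
    (Q : ℕ → Set ℕ → α → Prop) (hQ : ∀ x a {T T'}, T' ⊆ T → Q x T a → Q x T' a)
    {S : Set ℕ} (hS : S.Infinite)
    (hstep : ∀ S' ⊆ S, S'.Infinite → ∀ x ∈ S',
      ∃ T ⊆ {y ∈ S' | x < y}, T.Infinite ∧ ∃ a, Q x T a) :
    ∃ T ⊆ S, T.Infinite ∧ ∃ a, ∀ x ∈ T, Q x {y ∈ T | x < y} a := by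
  let InfSub := {S' : Set ℕ // S' ⊆ S ∧ S'.Infinite}
  have hnext (S' : InfSub) : ∃ Ta : InfSub × α,
      Ta.1.1 ⊆ {y ∈ S'.1 | sInf S'.1 < y} ∧ Q (sInf S'.1) Ta.1.1 Ta.2 := by
    obtain ⟨T, hT, hTinf, a, hQa⟩ :=
      hstep S'.1 S'.2.1 S'.2.2 _ (Nat.sInf_mem S'.2.2.nonempty)
    exact ⟨(⟨T, fun y hy => S'.2.1 (hT hy).1, hTinf⟩, a), hT, hQa⟩
  choose next hnext_sub hnext_Q using hnext
  let seq (i : ℕ) : InfSub := (fun S' => (next S').1)^[i] ⟨S, subset_rfl, hS⟩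
  have hseq_succ (i : ℕ) : seq (i + 1) = (next (seq i)).1 :=
    Function.iterate_succ_apply' _ _ _
  let x (i : ℕ) : ℕ := sInf (seq i).1
  have hx_mem (i : ℕ) : x i ∈ (seq i).1 := Nat.sInf_mem (seq i).2.2.nonempty
  have hseq_anti : Antitone fun i => (seq i).1 := antitone_nat_of_succ_le fun i => by
    rw [hseq_succ]; exact fun y hy => (hnext_sub _ hy).1
  have hx_lt (i : ℕ) : ∀ y ∈ (seq (i + 1)).1, x i < y := by
    rw [hseq_succ]; exact fun y hy => (hnext_sub _ hy).2
  have hx : StrictMono x := strictMono_nat_of_lt_succ fun i => hx_lt i _ (hx_mem _)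
  obtain ⟨a, ha⟩ := Finite.exists_infinite_fiber fun i => (next (seq i)).2
  refine ⟨x '' ((fun i => (next (seq i)).2) ⁻¹' {a}), ?_, ?_, a, ?_⟩
  · rintro _ ⟨i, -, rfl⟩
    exact (seq i).2.1 (hx_mem i)
  · exact (Set.infinite_coe_iff.mp ha).image hx.injective.injOn
  · rintro _ ⟨i, hi, rfl⟩
    have hcolor : (next (seq i)).2 = a := hi
    have hQi : Q (x i) (seq (i + 1)).1 a := by
      rw [hseq_succ, ← hcolor]; exact hnext_Q (seq i)
    refine hQ _ _ ?_ hQi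
    rintro _ ⟨⟨j, -, rfl⟩, hij⟩
    exact hseq_anti (Nat.succ_le_of_lt (hx.lt_iff_lt.mp hij)) (hx_mem j)

theorem IsEnum.mono {S T : Set ℕ} {n : ℕ} {t : Fin n → ℕ} (ht : IsEnum S t) (hST : S ⊆ T) :
    IsEnum T t :=
  ⟨ht.1, fun i => hST (ht.2 i)⟩

theorem IsEnum.cons {S : Set ℕ} {n : ℕ} {x : ℕ} {t : Fin n → ℕ} (hx : x ∈ S)
    (ht : IsEnum {y ∈ S | x < y} t) : IsEnum S (Fin.cons x t : Fin (n + 1) → ℕ) :=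
  ⟨Fin.strictMono_cons.mpr ⟨fun i => (ht.2 i).2, ht.1⟩,
    Fin.cases hx fun i => (ht.2 i).1⟩

theorem IsEnum.tail {S : Set ℕ} {n : ℕ} {t : Fin (n + 1) → ℕ} (ht : IsEnum S t) :
    IsEnum {y ∈ S | t 0 < y} (Fin.tail t) :=
  ⟨fun _ _ h => ht.1 (Fin.succ_lt_succ_iff.mpr h),
    fun i => ⟨ht.2 i.succ, ht.1 (Fin.succ_pos i)⟩⟩

theorem infinite_ramsey {α : Type*} [Finite α] (n : ℕ) {S : Set ℕ} (hS : S.Infinite)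
    (C : α → Set (Fin n → ℕ)) (hC : ∀ t, IsEnum S t → ∃ a, t ∈ C a) :
    ∃ T ⊆ S, T.Infinite ∧ ∃ a, ∀ t, IsEnum T t → t ∈ C a := by
  induction n generalizing S with
  | zero =>
    obtain ⟨a, ha⟩ := hC Fin.elim0 ⟨fun i => i.elim0, fun i => i.elim0⟩
    exact ⟨S, subset_rfl, hS, a, fun t _ => Subsingleton.elim (α := Fin 0 → ℕ) t _ ▸ ha⟩
  | succ n ih =>
    obtain ⟨T, hTS, hT, a, ha⟩ := hS.exists_infinite_subset_forall_diag
      (fun x T a => ∀ t, IsEnum T t → (Fin.cons x t : Fin (n + 1) → ℕ) ∈ C a)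
      (fun _ _ _ _ hsub hQ t ht => hQ t (ht.mono hsub))
      fun S' hS'S hS' x hx =>
        ih (hS'.sep_lt x) (fun a => {t | (Fin.cons x t : Fin (n + 1) → ℕ) ∈ C a})
          fun t ht => hC _ ((ht.cons hx).mono hS'S)
    refine ⟨T, hTS, hT, a, fun t ht => ?_⟩
    simpa only [Fin.cons_self_tail] using ha (t 0) (ht.2 0) _ ht.tail

theorem strictMono_finProdFinEquiv_ofLex {m n : ℕ} :
    StrictMono (fun x : Fin m ×ₗ Fin n => finProdFinEquiv (ofLex x)) := by
  intro x y h
  simp only [Fin.lt_def, finProdFinEquiv_apply_val]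
  rcases Prod.Lex.lt_iff.mp h with hi | ⟨hi, hj⟩
  · have hblock : n * ((ofLex x).1 + 1) ≤ n * (ofLex y).1 := Nat.mul_le_mul_left n hi
    have := (ofLex x).2.2
    rw [Nat.mul_add_one] at hblock
    omega
  · rw [hi]
    exact Nat.add_lt_add_right hj _

theorem finProdFinEquiv_lt_finProdFinEquiv {m n : ℕ} {x y : Fin m × Fin n} :
    finProdFinEquiv x < finProdFinEquiv y ↔ toLex x < toLex y :=
  strictMono_finProdFinEquiv_ofLex.lt_iff_lt

def plegmaOfTuple (k l : ℕ) (t : Fin (k * l) → ℕ) : Fin l → Fin k → ℕ :=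
  fun j i => t (finProdFinEquiv (i, j))

def tupleOfPlegma {k l : ℕ} (q : Fin l → Fin k → ℕ) : Fin (k * l) → ℕ :=
  fun r => q (finProdFinEquiv.symm r).2 (finProdFinEquiv.symm r).1

theorem plegmaOfTuple_tupleOfPlegma {k l : ℕ} (q : Fin l → Fin k → ℕ) :
    plegmaOfTuple k l (tupleOfPlegma q) = q := by
  funext j i
  simp [plegmaOfTuple, tupleOfPlegma]

theorem IsEnum.isPlegma_plegmaOfTuple {S : Set ℕ} {k l : ℕ} {t : Fin (k * l) → ℕ}
    (ht : IsEnum S t) : IsPlegma S (plegmaOfTuple k l t) := by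
  have hlex {x y : Fin k × Fin l} (h : toLex x < toLex y) :
      t (finProdFinEquiv x) < t (finProdFinEquiv y) :=
    ht.1 (finProdFinEquiv_lt_finProdFinEquiv.mpr h)
  refine ⟨fun j => ⟨fun i i' h => hlex ?_, fun i => ht.2 _⟩, fun i j j' h => hlex ?_,
    fun i hi j j' => hlex ?_⟩
  · exact Prod.Lex.toLex_lt_toLex.mpr (.inl h)
  · exact Prod.Lex.toLex_lt_toLex.mpr (.inr ⟨rfl, h⟩)
  · exact Prod.Lex.toLex_lt_toLex.mpr (.inl (Fin.lt_def.mpr (Nat.lt_add_one _)))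

theorem IsPlegma.isEnum_tupleOfPlegma {S : Set ℕ} {k l : ℕ} {q : Fin l → Fin k → ℕ}
    (hq : IsPlegma S q) : IsEnum S (tupleOfPlegma q) := by
  obtain ⟨hrow, hcol, hnext⟩ := hq
  refine ⟨fun r r' h => ?_, fun r => (hrow _).2 _⟩
  rw [← finProdFinEquiv.apply_symm_apply r, ← finProdFinEquiv.apply_symm_apply r',
    finProdFinEquiv_lt_finProdFinEquiv, Prod.Lex.toLex_lt_toLex] at h
  unfold tupleOfPlegma
  generalize finProdFinEquiv.symm r = x, finProdFinEquiv.symm r' = y at h ⊢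
  obtain ⟨i, j⟩ := x
  obtain ⟨i', j'⟩ := y
  rcases h with hi | ⟨rfl, hj⟩
  · have hsucc : (i : ℕ) + 1 < k := lt_of_le_of_lt hi i'.2
    calc q j i < q j' ⟨i + 1, hsucc⟩ := hnext i hsucc j j'
      _ ≤ q j' i' := (hrow j').1.monotone (Fin.le_def.mpr hi)
  · exact hcol i hj

/-- Ramsey theorem for plegma families. For every finite partition
(covering) of the plegma families of length `l` in `[M]^k` into `p` pieces, there is an
infinite `L ⊆ M` such that all plegma families of length `l` in `[L]^k` lie in one piece.
Infinite subsets of `ℕ` are represented by their strictly increasing enumerations. -/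
theorem statement1 (k l p : ℕ) (M : ℕ → ℕ) (hM : StrictMono M)
    (P : Fin p → Set (Fin l → Fin k → ℕ))
    (hcover : ∀ q : Fin l → Fin k → ℕ, IsPlegma (Set.range M) q → ∃ j, q ∈ P j) :
    ∃ (L : ℕ → ℕ) (j₀ : Fin p), StrictMono L ∧ Set.range L ⊆ Set.range M ∧
      ∀ q : Fin l → Fin k → ℕ, IsPlegma (Set.range L) q → q ∈ P j₀ := by
  obtain ⟨T, hTM, hT, j₀, hj₀⟩ := infinite_ramsey (k * l)
    (Set.infinite_range_of_injective hM.injective) (fun j => {t | plegmaOfTuple k l t ∈ P j})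
    fun t ht => hcover _ ht.isPlegma_plegmaOfTuple
  have hrange : Set.range (Nat.nth (· ∈ T)) = T := Nat.range_nth_of_infinite hT
  refine ⟨Nat.nth (· ∈ T), j₀, Nat.nth_strictMono hT, hrange.trans_subset hTM,
    fun q hq => ?_⟩
  rw [hrange] at hq
  simpa only [Set.mem_ofPred_eq, plegmaOfTuple_tupleOfPlegma] using
    hj₀ _ hq.isEnum_tupleOfPlegma
end

section
/- Let k ∈ ℕ and M an infinite subset of ℕ. Then for every s, t ∈ [M]^k which are skipped in M and satisfy max s < min t, there exists a plegma path of length exactly k in [M]^k from s to t; moreover, every plegma path in [ℕ]^k from s to t has length at least k. -/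
/-- `(s, t)` is a plegma pair in `[M]^k`. -/
def IsPlegmaPair (M : Set ℕ) {k : ℕ} (s t : Fin k → ℕ) : Prop :=
  IsPlegma M ![s, t]

/-- `(p j)_{j=0,…,l}` is a plegma path of length `l` in `[M]^k`, i.e. each pair of
consecutive members is a plegma pair in `[M]^k`. -/
def IsPlegmaPath (M : Set ℕ) {k l : ℕ} (p : Fin (l + 1) → Fin k → ℕ) : Prop :=
  ∀ j : Fin l, IsPlegmaPair M (p j.castSucc) (p j.succ)

/-- `s ∈ [M]^k` is skipped in `M`: between any two consecutive entries of `s` there is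
an element of `M`. -/
def IsSkipped (M : Set ℕ) {k : ℕ} (s : Fin k → ℕ) : Prop :=
  IsEnum M s ∧ ∀ (i : Fin k) (hi : (i : ℕ) + 1 < k),
    ∃ m ∈ M, s i < m ∧ m < s ⟨(i : ℕ) + 1, hi⟩

/-- helper congruence lemma for `Fin.mk` arguments. -/
lemma fin_congr {k : ℕ} (s : Fin k → ℕ) {a b : ℕ} (ha : a < k) (hb : b < k)
    (h : a = b) : s ⟨a, ha⟩ = s ⟨b, hb⟩ := by subst h; rfl

/-- helper: build a plegma pair from the interleaving chain. -/
lemma isPlegmaPair_of (M : Set ℕ) {k : ℕ} {u v : Fin k → ℕ}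
    (hu : IsEnum M u) (hv : IsEnum M v)
    (huv : ∀ i, u i < v i)
    (hvu : ∀ (i : Fin k) (hi : (i : ℕ) + 1 < k), v i < u ⟨(i : ℕ) + 1, hi⟩) :
    IsPlegmaPair M u v := by
  refine ⟨?_, ?_, ?_⟩
  · intro j; fin_cases j <;> simpa
  · intro i a b hab
    fin_cases a <;> fin_cases b <;>
      simp_all [Matrix.cons_val_zero, Matrix.cons_val_one, Matrix.head_cons]
  · intro i hi a b
    have h1 := huv i
    have h2 := hvu i hi
    have h3 := huv ⟨(i : ℕ) + 1, hi⟩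
    fin_cases a <;> fin_cases b <;>
      simp [Matrix.cons_val_zero, Matrix.cons_val_one, Matrix.head_cons] <;> omega

/-- the index function of the constructed path. -/
def qfun (k j i : ℕ) : ℕ := if i + j < k then 2 * i + j else 2 * i + k - 1 + j

lemma qfun_bound {k : ℕ} (hk : 0 < k) {j i : ℕ} (hj : j ≤ k) (hi : i < k) :
    qfun k j i ≤ 4 * k - 3 := by
  unfold qfun; split <;> omega

lemma qfun_mono {k : ℕ} {j a b : ℕ} (hab : a < b) (hb : b < k) :
    qfun k j a < qfun k j b := by
  unfold qfun; split <;> split <;> omega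

lemma qfun_next {k : ℕ} (hk : 0 < k) {j i : ℕ} :
    qfun k j i < qfun k (j + 1) i := by
  unfold qfun; split <;> split <;> omega

lemma qfun_cross {k : ℕ} (hk : 0 < k) {j i : ℕ} (hi : i + 1 < k) :
    qfun k (j + 1) i < qfun k j (i + 1) := by
  unfold qfun; split <;> split <;> omega

/-- the path built from an increasing chain `C` of members of `M`. -/
lemma path_of_chain (k : ℕ) (hk : 0 < k) (M : Set ℕ) (C : ℕ → ℕ)
    (Cmem : ∀ r, r ≤ 4 * k - 3 → C r ∈ M)
    (Clt : ∀ a b, a < b → b ≤ 4 * k - 3 → C a < C b) :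
    IsPlegmaPath M (fun (j : Fin (k + 1)) (i : Fin k) => C (qfun k j i)) := by
  intro j
  have hj : (j : ℕ) < k := j.isLt
  have henum : ∀ jn : ℕ, jn ≤ k → IsEnum M (fun i : Fin k => C (qfun k jn i)) := by
    intro jn hjn
    constructor
    · intro a b hab
      exact Clt _ _ (qfun_mono hab b.isLt) (qfun_bound hk hjn b.isLt)
    · intro i
      exact Cmem _ (qfun_bound hk hjn i.isLt)
  refine isPlegmaPair_of M (henum (j : ℕ) (by omega)) (henum ((j : ℕ) + 1) (by omega))
    ?_ ?_
  · intro i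
    exact Clt _ _ (qfun_next hk) (qfun_bound hk (by omega) i.isLt)
  · intro i hi
    exact Clt _ _ (qfun_cross hk hi) (qfun_bound hk (by omega) hi)

/-- one step of the lower-bound chain. -/
lemma plegma_step (k l : ℕ) (hcon : l < k) (p : Fin (l + 1) → Fin k → ℕ)
    (hpath : IsPlegmaPath Set.univ p) (n : ℕ) (hn : n + 1 ≤ l) :
    p ⟨l - n, by omega⟩ ⟨n, by omega⟩ < p ⟨l - (n + 1), by omega⟩ ⟨n + 1, by omega⟩ := by
  obtain ⟨-, -, h3⟩ := hpath ⟨l - n - 1, by omega⟩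
  have h4 := h3 ⟨n, by omega⟩ (show n + 1 < k by omega) 1 0
  simp only [Matrix.cons_val_one, Matrix.head_cons, Matrix.cons_val_zero] at h4
  have e1 : ((⟨l - n - 1, by omega⟩ : Fin l).succ : Fin (l + 1))
      = ⟨l - n, by omega⟩ := by ext; simp only [Fin.val_succ]; omega
  have e2 : ((⟨l - n - 1, by omega⟩ : Fin l).castSucc : Fin (l + 1))
      = ⟨l - (n + 1), by omega⟩ := by ext; simp only [Fin.coe_castSucc]; omega
  rw [e1, e2] at h4
  exact h4

/-- For skipped `s, t ∈ [M]^k` with `max s < min t` there is a plegma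
path of length exactly `k` in `[M]^k` from `s` to `t`; moreover every plegma path in
`[ℕ]^k` from `s` to `t` has length at least `k`. -/
theorem statement3 (k : ℕ) (hk : 0 < k) (M : ℕ → ℕ) (hM : StrictMono M)
    (s t : Fin k → ℕ) (hs : IsSkipped (Set.range M) s) (ht : IsSkipped (Set.range M) t)
    (hst : s ⟨k - 1, by omega⟩ < t ⟨0, hk⟩) :
    (∃ p : Fin (k + 1) → Fin k → ℕ,
      IsPlegmaPath (Set.range M) p ∧ p 0 = s ∧ p (Fin.last k) = t) ∧
    ∀ (l : ℕ) (p : Fin (l + 1) → Fin k → ℕ),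
      IsPlegmaPath Set.univ p → p 0 = s → p (Fin.last l) = t → k ≤ l := by
  obtain ⟨⟨hsmono, hsmem⟩, hsskip⟩ := hs
  obtain ⟨⟨htmono, htmem⟩, htskip⟩ := ht
  constructor
  · -- existence of a path of length k
    obtain ⟨m', hm'⟩ : ∃ f : ℕ → ℕ, ∀ i (h : i + 1 < k),
        f i ∈ Set.range M ∧ s ⟨i, by omega⟩ < f i ∧ f i < s ⟨i + 1, h⟩ :=
      ⟨fun i => if h : i + 1 < k then (hsskip ⟨i, by omega⟩ h).choose else 0,
       fun i h => by
        simp only [dif_pos h]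
        exact (hsskip ⟨i, by omega⟩ h).choose_spec⟩
    obtain ⟨n', hn'⟩ : ∃ f : ℕ → ℕ, ∀ i (h : i + 1 < k),
        f i ∈ Set.range M ∧ t ⟨i, by omega⟩ < f i ∧ f i < t ⟨i + 1, h⟩ :=
      ⟨fun i => if h : i + 1 < k then (htskip ⟨i, by omega⟩ h).choose else 0,
       fun i h => by
        simp only [dif_pos h]
        exact (htskip ⟨i, by omega⟩ h).choose_spec⟩
    obtain ⟨C, hCA, hCAm, hCB, hCBm⟩ : ∃ C : ℕ → ℕ,
        (∀ r (h : r < 2 * k - 1), r % 2 = 0 → C r = s ⟨r / 2, by omega⟩) ∧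
        (∀ r, r < 2 * k - 1 → r % 2 = 1 → C r = m' (r / 2)) ∧
        (∀ r (h : 2 * k - 1 ≤ r) (h2 : r ≤ 4 * k - 3), (r - (2 * k - 1)) % 2 = 0 →
          C r = t ⟨(r - (2 * k - 1)) / 2, by omega⟩) ∧
        (∀ r, 2 * k - 1 ≤ r → (r - (2 * k - 1)) % 2 = 1 →
          C r = n' ((r - (2 * k - 1)) / 2)) := by
      refine ⟨fun r =>
        if h1 : r < 2 * k - 1 then
          (if r % 2 = 0 then (if h : r / 2 < k then s ⟨r / 2, h⟩ else 0) else m' (r / 2))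
        else
          (if (r - (2 * k - 1)) % 2 = 0 then
            (if h : (r - (2 * k - 1)) / 2 < k then t ⟨(r - (2 * k - 1)) / 2, h⟩ else 0)
          else n' ((r - (2 * k - 1)) / 2)), ?_, ?_, ?_, ?_⟩
      · intro r h hr
        simp only [dif_pos h, if_pos hr]
        rw [dif_pos (show r / 2 < k by omega)]
      · intro r h hr
        simp only [dif_pos h]
        rw [if_neg (by omega)]
      · intro r h h2 hr
        simp only [dif_neg (show ¬ r < 2 * k - 1 by omega), if_pos hr]
        rw [dif_pos (show (r - (2 * k - 1)) / 2 < k by omega)]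
      · intro r h hr
        simp only [dif_neg (show ¬ r < 2 * k - 1 by omega)]
        rw [if_neg (by omega)]
    -- C is strictly increasing on [0, 4k-3]
    have Cstep : ∀ r, r + 1 ≤ 4 * k - 3 → C r < C (r + 1) := by
      intro r hr
      rcases lt_trichotomy (r + 1) (2 * k - 1) with h1 | h1 | h1
      · -- both in the s-region
        rcases Nat.even_or_odd r with he | ho
        · have hre : r % 2 = 0 := Nat.even_iff.mp he
          have hh : r / 2 + 1 < k := by omega
          rw [hCA r (by omega) hre, hCAm (r + 1) (by omega) (by omega)]
          rw [show (r + 1) / 2 = r / 2 by omega]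
          exact (hm' (r / 2) hh).2.1
        · have hro : r % 2 = 1 := Nat.odd_iff.mp ho
          have hh : r / 2 + 1 < k := by omega
          rw [hCAm r (by omega) hro, hCA (r + 1) (by omega) (by omega)]
          rw [fin_congr s (by omega) hh (by omega : (r + 1) / 2 = r / 2 + 1)]
          exact (hm' (r / 2) hh).2.2
      · -- crossing from the s-region to the t-region : r = 2k-2
        have hre : r % 2 = 0 := by omega
        rw [hCA r (by omega) hre, hCB (r + 1) (by omega) (by omega) (by omega)]
        rw [fin_congr s (by omega) (by omega : k - 1 < k) (by omega : r / 2 = k - 1)]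
        rw [fin_congr t (by omega) hk (by omega : (r + 1 - (2 * k - 1)) / 2 = 0)]
        exact hst
      · -- both in the t-region
        have hb : 2 * k - 1 ≤ r := by omega
        rcases Nat.even_or_odd (r - (2 * k - 1)) with he | ho
        · have hre : (r - (2 * k - 1)) % 2 = 0 := Nat.even_iff.mp he
          have hh : (r - (2 * k - 1)) / 2 + 1 < k := by omega
          rw [hCB r hb (by omega) hre, hCBm (r + 1) (by omega) (by omega)]
          rw [show (r + 1 - (2 * k - 1)) / 2 = (r - (2 * k - 1)) / 2 by omega]
          exact (hn' _ hh).2.1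
        · have hro : (r - (2 * k - 1)) % 2 = 1 := Nat.odd_iff.mp ho
          have hh : (r - (2 * k - 1)) / 2 + 1 < k := by omega
          rw [hCBm r hb hro, hCB (r + 1) (by omega) (by omega) (by omega)]
          rw [fin_congr t (by omega) hh
            (by omega : (r + 1 - (2 * k - 1)) / 2 = (r - (2 * k - 1)) / 2 + 1)]
          exact (hn' _ hh).2.2
    have Clt : ∀ a b, a < b → b ≤ 4 * k - 3 → C a < C b := by
      intro a b
      induction b with
      | zero => omega
      | succ n ih =>
        intro h hb
        rcases (by omega : a = n ∨ a < n) with rfl | h'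
        · exact Cstep a hb
        · exact (ih h' (by omega)).trans (Cstep n hb)
    have Cmem : ∀ r, r ≤ 4 * k - 3 → C r ∈ Set.range M := by
      intro r hr
      rcases lt_or_ge r (2 * k - 1) with h1 | h1
      · rcases Nat.even_or_odd r with he | ho
        · rw [hCA r h1 (Nat.even_iff.mp he)]; exact hsmem _
        · have hro : r % 2 = 1 := Nat.odd_iff.mp ho
          rw [hCAm r h1 hro]
          exact (hm' (r / 2) (by omega)).1
      · rcases Nat.even_or_odd (r - (2 * k - 1)) with he | ho
        · rw [hCB r h1 hr (Nat.even_iff.mp he)]; exact htmem _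
        · have hro : (r - (2 * k - 1)) % 2 = 1 := Nat.odd_iff.mp ho
          rw [hCBm r h1 hro]
          exact (hn' _ (by omega)).1
    refine ⟨fun j i => C (qfun k j i), path_of_chain k hk _ C Cmem Clt, ?_, ?_⟩
    · funext i
      show C (qfun k ((0 : Fin (k + 1)) : ℕ) (i : ℕ)) = s i
      have h0 : ((0 : Fin (k + 1)) : ℕ) = 0 := rfl
      rw [h0]
      have hq : qfun k 0 (i : ℕ) = 2 * (i : ℕ) := by
        unfold qfun; rw [if_pos (by omega : (i : ℕ) + 0 < k)]; omega
      rw [hq, hCA (2 * (i : ℕ)) (by omega) (by omega)]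
      exact congrArg s (Fin.ext (show 2 * (i : ℕ) / 2 = (i : ℕ) by omega))
    · funext i
      show C (qfun k ((Fin.last k : Fin (k + 1)) : ℕ) (i : ℕ)) = t i
      have h0 : ((Fin.last k : Fin (k + 1)) : ℕ) = k := rfl
      rw [h0]
      have hq : qfun k k (i : ℕ) = 2 * (i : ℕ) + 2 * k - 1 := by
        unfold qfun; rw [if_neg (by omega)]; omega
      rw [hq, hCB (2 * (i : ℕ) + 2 * k - 1) (by omega) (by omega) (by omega)]
      exact congrArg t
        (Fin.ext (show (2 * (i : ℕ) + 2 * k - 1 - (2 * k - 1)) / 2 = (i : ℕ) by omega))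
  · -- the lower bound
    intro l p hpath hp0 hpl
    by_contra hcon
    push_neg at hcon
    have key : ∀ i : ℕ, ∀ hi : i ≤ l, t ⟨0, hk⟩ ≤ p ⟨l - i, by omega⟩ ⟨i, by omega⟩ := by
      intro i
      induction i with
      | zero =>
        intro _
        have h0 : (⟨l - 0, by omega⟩ : Fin (l + 1)) = Fin.last l := by
          ext; simp [Fin.last]
        rw [h0, hpl]
      | succ n ih =>
        intro hn
        have h1 := ih (by omega)
        have h4 := plegma_step k l hcon p hpath n hn
        exact (h1.trans_lt h4).le
    have hfin := key l le_rfl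
    have h0 : (⟨l - l, by omega⟩ : Fin (l + 1)) = 0 := by ext; simp
    rw [h0, hp0] at hfin
    have h5 : s ⟨l, by omega⟩ ≤ s ⟨k - 1, by omega⟩ :=
      hsmono.monotone (by exact (by omega : l ≤ k - 1))
    omega
end

section
/- Let k_1, k_2 ∈ ℕ with k_1 < k_2. Then for every infinite subset M of ℕ and every map φ : [M]^{k_1} → [ℕ]^{k_2}, there exists an infinite subset L of M such that for every plegma pair (s_1, s_2) in [L]^{k_1}, neither (φ(s_1), φ(s_2)) nor (φ(s_2), φ(s_1)) is a plegma pair in [ℕ]^{k_2}. In particular, there is no infinite subset L of M such that φ maps every plegma family in [L]^{k_1} to a plegma family in [ℕ]^{k_2}. -/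
section Aux

open Set

lemma isPlegmaPair_mk {M : Set ℕ} {k : ℕ} {s t : Fin k → ℕ}
    (hs : StrictMono s) (ht : StrictMono t)
    (hsM : ∀ i, s i ∈ M) (htM : ∀ i, t i ∈ M)
    (hst : ∀ i, s i < t i)
    (hts : ∀ (i : Fin k) (hi : (i : ℕ) + 1 < k), t i < s ⟨(i : ℕ) + 1, hi⟩) :
    IsPlegmaPair M s t := by
  refine ⟨?_, ?_, ?_⟩
  · intro j; fin_cases j
    · exact ⟨hs, hsM⟩
    · exact ⟨ht, htM⟩
  · intro i j j' hjj'
    fin_cases j <;> fin_cases j' <;> simp_all [Fin.lt_def]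
  · intro i hi j j'
    have h1 : s i < s ⟨(i : ℕ) + 1, hi⟩ := hs (by simp [Fin.lt_def])
    have h2 : t ⟨(i : ℕ) + 1, hi⟩ > t i := ht (by simp [Fin.lt_def])
    have h3 : s i < t ⟨(i : ℕ) + 1, hi⟩ := h1.trans (hst _)
    have h4 : t i < t ⟨(i : ℕ) + 1, hi⟩ := (hts i hi).trans (hst _)
    fin_cases j <;> fin_cases j' <;> simp_all

lemma IsPlegmaPair.col {M : Set ℕ} {k : ℕ} {s t : Fin k → ℕ}
    (h : IsPlegmaPair M s t) (i : Fin k) : s i < t i := by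
  have := h.2.1 i (show (0 : Fin 2) < 1 by decide)
  simpa using this

lemma IsPlegmaPair.cross {M : Set ℕ} {k : ℕ} {s t : Fin k → ℕ}
    (h : IsPlegmaPair M s t) (i : Fin k) (hi : (i : ℕ) + 1 < k) :
    t i < s ⟨(i : ℕ) + 1, hi⟩ := by
  have := h.2.2 i hi 1 0
  simpa using this

lemma IsPlegmaPair.enum1 {M : Set ℕ} {k : ℕ} {s t : Fin k → ℕ}
    (h : IsPlegmaPair M s t) : IsEnum M s := by
  have := h.1 0; simpa using this

lemma IsPlegmaPair.enum2 {M : Set ℕ} {k : ℕ} {s t : Fin k → ℕ}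
    (h : IsPlegmaPair M s t) : IsEnum M t := by
  have := h.1 1; simpa using this

/-- the basic infinite plegma path `vv L k₁ n` in `[range L]^{k₁}`. -/
private def vv (L : ℕ → ℕ) (k₁ : ℕ) (n : ℕ) : Fin k₁ → ℕ := fun i => L (2 * (i : ℕ) + n)

variable {k₁ k₂ : ℕ}

lemma vv_pair (L : ℕ → ℕ) (hL : StrictMono L) (n : ℕ) :
    IsPlegmaPair (range L) (vv L k₁ n) (vv L k₁ (n + 1)) := by
  apply isPlegmaPair_mk
  · intro a b h
    have h' : (a : ℕ) < b := h
    exact hL (by omega)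
  · intro a b h
    have h' : (a : ℕ) < b := h
    exact hL (by omega)
  · intro i; exact mem_range_self _
  · intro i; exact mem_range_self _
  · intro i; exact hL (by omega)
  · intro i hi; exact hL (by simp; omega)

lemma noForward (h1 : 0 < k₁) (hk : k₁ < k₂) (L : ℕ → ℕ) (hL : StrictMono L)
    (φ : (Fin k₁ → ℕ) → (Fin k₂ → ℕ)) :
    ∃ s t : Fin k₁ → ℕ, IsPlegmaPair (range L) s t ∧
      ¬ IsPlegmaPair univ (φ s) (φ t) := by
  by_contra hcon
  push_neg at hcon
  have h := hcon
  -- growth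
  have hk2 : 0 < k₂ := h1.trans hk
  set f : ℕ → ℕ := fun n => φ (vv L k₁ n) ⟨0, hk2⟩ with hf
  have hfmono : StrictMono f := strictMono_nat_of_lt_succ fun n =>
    (h _ _ (vv_pair L hL n)).col ⟨0, hk2⟩
  -- the path
  have hbound : ∀ n : ℕ, f (n + k₁) ≤ φ (vv L k₁ 0) ⟨k₁, hk⟩ := by
    intro n
    set e : ℕ → ℕ → ℕ := fun j i => 2 * i + j + (if j + i < k₁ then 0 else n) with he
    set P : ℕ → Fin k₁ → ℕ := fun j i => L (e j (i : ℕ)) with hP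
    have hpair : ∀ j : ℕ, IsPlegmaPair (range L) (P j) (P (j + 1)) := by
      intro j
      apply isPlegmaPair_mk
      · intro a b hab
        apply hL; simp only [he]
        have : (a : ℕ) < (b : ℕ) := hab
        split_ifs <;> omega
      · intro a b hab
        apply hL; simp only [he]
        have : (a : ℕ) < (b : ℕ) := hab
        split_ifs <;> omega
      · intro i; exact mem_range_self _
      · intro i; exact mem_range_self _
      · intro i; apply hL; simp only [he]; split_ifs <;> omega
      · intro i hi; apply hL; simp only [he]; split_ifs <;> omega
    have hchain : ∀ jj : ℕ, ∀ _ : jj ≤ k₁,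
        φ (P k₁) ⟨0, hk2⟩ ≤ φ (P (k₁ - jj)) ⟨jj, lt_of_le_of_lt ‹jj ≤ k₁› hk⟩ := by
      intro jj
      induction jj with
      | zero => intro _; simp
      | succ m ih =>
        intro hm
        have h5 := ih (by omega)
        have h6 : k₁ - m - 1 + 1 = k₁ - m := by omega
        have h7 := (h _ _ (hpair (k₁ - m - 1))).cross ⟨m, by omega⟩ (by simp; omega)
        rw [h6] at h7
        have h8 : k₁ - (m + 1) = k₁ - m - 1 := by omega
        rw [h8]
        exact (h5.trans_lt h7).le
    have hP0 : P 0 = vv L k₁ 0 := by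
      funext i; simp only [hP, he, vv]
      have : 0 + (i : ℕ) < k₁ := by omega
      rw [if_pos this]
    have hPk : P k₁ = vv L k₁ (n + k₁) := by
      funext i; simp only [hP, he, vv]
      have : ¬ (k₁ + (i : ℕ) < k₁) := by omega
      rw [if_neg this]; congr 1; omega
    have := hchain k₁ le_rfl
    rw [Nat.sub_self] at this
    rw [hP0, hPk] at this
    simpa [hf] using this
  have hgrow := hfmono.le_apply (x := φ (vv L k₁ 0) ⟨k₁, hk⟩ + k₁)
  have := hbound (φ (vv L k₁ 0) ⟨k₁, hk⟩)
  omega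

lemma noBackward (h1 : 0 < k₁) (hk2 : 0 < k₂) (L : ℕ → ℕ) (hL : StrictMono L)
    (φ : (Fin k₁ → ℕ) → (Fin k₂ → ℕ)) :
    ∃ s t : Fin k₁ → ℕ, IsPlegmaPair (range L) s t ∧
      ¬ IsPlegmaPair univ (φ t) (φ s) := by
  by_contra hcon
  push_neg at hcon
  set f : ℕ → ℕ := fun n => φ (vv L k₁ n) ⟨0, hk2⟩ with hf
  have hdec : ∀ n, f (n + 1) < f n := by
    intro n
    have hp := vv_pair (k₁ := k₁) L hL n
    exact (hcon (vv L k₁ n) (vv L k₁ (n + 1)) hp).col ⟨0, hk2⟩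
  have hle : ∀ n, f n + n ≤ f 0 := by
    intro n; induction n with
    | zero => omega
    | succ m ih => have := hdec m; omega
  have := hle (f 0 + 1); omega

/-- Infinite Ramsey theorem for `r`-tuples, in sequence form. -/
lemma ramseyInf {κ : Type} [Finite κ] :
    ∀ (r : ℕ) (c : (Fin r → ℕ) → κ) (M : ℕ → ℕ), StrictMono M →
    ∃ L : ℕ → ℕ, StrictMono L ∧ Set.range L ⊆ Set.range M ∧
      ∃ k₀ : κ, ∀ g : Fin r → ℕ, StrictMono g → (∀ i, g i ∈ Set.range L) → c g = k₀ := by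
  intro r
  induction r with
  | zero =>
    intro c M hM
    refine ⟨M, hM, subset_rfl, c (fun i => i.elim0), ?_⟩
    intro g _ _
    congr 1
    funext i
    exact i.elim0
  | succ r ih =>
    intro c M hM
    classical
    choose F hFmono hFsub k₀f hFhom using ih
    let step : {f : ℕ → ℕ // StrictMono f} → {f : ℕ → ℕ // StrictMono f} :=
      fun f => ⟨F (fun g => c (Fin.cons (f.1 0) g)) (fun i => f.1 (i + 1))
          (fun a b hab => f.2 (by omega)),
        hFmono _ _ _⟩
    let S : ℕ → {f : ℕ → ℕ // StrictMono f} :=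
      fun n => Nat.rec ⟨M, hM⟩ (fun _ prev => step prev) n
    have hS : ∀ n, S (n + 1) = step (S n) := fun n => rfl
    set a : ℕ → ℕ := fun n => (S n).1 0 with ha
    have hstep_sub : ∀ f : {f : ℕ → ℕ // StrictMono f},
        range (step f).1 ⊆ range f.1 ∧ ∀ x ∈ range (step f).1, f.1 0 < x := by
      intro f
      constructor
      · intro x hx
        have := hFsub (fun g => c (Fin.cons (f.1 0) g)) (fun i => f.1 (i + 1))
          (fun a b hab => f.2 (by omega)) hx
        rcases this with ⟨i, hi⟩
        exact ⟨i + 1, hi⟩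
      · intro x hx
        have := hFsub (fun g => c (Fin.cons (f.1 0) g)) (fun i => f.1 (i + 1))
          (fun a b hab => f.2 (by omega)) hx
        rcases this with ⟨i, hi⟩
        rw [← hi]
        exact f.2 (by omega)
    have hstep_hom : ∀ f : {f : ℕ → ℕ // StrictMono f}, ∀ g : Fin r → ℕ,
        StrictMono g → (∀ i, g i ∈ range (step f).1) →
        c (Fin.cons (f.1 0) g) =
          k₀f (fun g => c (Fin.cons (f.1 0) g)) (fun i => f.1 (i + 1))
            (fun a b hab => f.2 (by omega)) := by
      intro f g hg hgr
      exact hFhom _ _ _ g hg hgr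
    have hchain : ∀ n m, n ≤ m → range (S m).1 ⊆ range (S n).1 := by
      intro n m hnm
      induction m with
      | zero => have : n = 0 := by omega
                subst this; exact subset_rfl
      | succ m ihm =>
        rcases Nat.eq_or_lt_of_le hnm with h | h
        · subst h; exact subset_rfl
        · exact ((hS m ▸ (hstep_sub (S m)).1)).trans (ihm (by omega))
    have ha_mem : ∀ n, a n ∈ range (S n).1 := fun n => ⟨0, rfl⟩
    have ha_lt : ∀ n, ∀ x ∈ range (S (n + 1)).1, a n < x := by
      intro n x hx
      exact (hstep_sub (S n)).2 x (hS n ▸ hx)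
    have hamono : StrictMono a := by
      apply strictMono_nat_of_lt_succ
      intro n
      exact ha_lt n _ (ha_mem (n + 1))
    let K : ℕ → κ := fun n =>
      k₀f (fun g => c (Fin.cons (a n) g)) (fun i => (S n).1 (i + 1))
        (fun x y hxy => (S n).2 (by omega))
    have hK : ∀ n, ∀ g : Fin r → ℕ, StrictMono g →
        (∀ i, g i ∈ range (S (n + 1)).1) → c (Fin.cons (a n) g) = K n := by
      intro n g hg hgr
      have := hstep_hom (S n) g hg (fun i => hS n ▸ hgr i)
      exact this
    have : ∃ k₀ : κ, Infinite (K ⁻¹' {k₀} : Set ℕ) := Finite.exists_infinite_fiber K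
    obtain ⟨k₀, hk₀⟩ := this
    have hinf : (setOf (fun n => K n = k₀)).Infinite := by
      rw [← Set.infinite_coe_iff]
      exact hk₀
    set p : ℕ → Prop := fun n => K n = k₀ with hp
    set L : ℕ → ℕ := fun m => a (Nat.nth p m) with hLdef
    refine ⟨L, ?_, ?_, k₀, ?_⟩
    · exact hamono.comp (Nat.nth_strictMono hinf)
    · intro x hx
      rcases hx with ⟨m, hm⟩
      rw [← hm]
      exact hchain 0 _ (Nat.zero_le _) (ha_mem _)
    · intro g hg hgr
      obtain ⟨m₀, hm₀⟩ := hgr 0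
      set n₀ := Nat.nth p m₀ with hn₀
      have hgtail : ∀ j : Fin r, Fin.tail g j ∈ range (S (n₀ + 1)).1 := by
        intro j
        obtain ⟨mj, hmj⟩ := hgr j.succ
        have hg0 : a n₀ = g 0 := hm₀
        have hgj : a (Nat.nth p mj) = g j.succ := hmj
        have hgt : a n₀ < g j.succ := hg0 ▸ hg (Fin.succ_pos j)
        have hnj : n₀ < Nat.nth p mj := by
          by_contra hle
          push_neg at hle
          have := hamono.monotone hle
          omega
        have : g j.succ ∈ range (S (Nat.nth p mj)).1 := hmj ▸ ha_mem _
        exact hchain (n₀ + 1) _ (by omega) this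
      have htail : StrictMono (Fin.tail g) := by
        intro x y hxy
        exact hg (by simpa using hxy)
      have hg0 : g 0 = a n₀ := (show a n₀ = g 0 from hm₀).symm
      have h1 : g = Fin.cons (a n₀) (Fin.tail g) := by
        rw [← hg0]
        exact (Fin.cons_self_tail g).symm
      rw [h1, hK n₀ (Fin.tail g) htail hgtail]
      exact Nat.nth_mem_of_infinite hinf m₀

/-- interleaving of a plegma pair into a `2k`-tuple -/
private def zipPair {k : ℕ} (s t : Fin k → ℕ) : Fin (2 * k) → ℕ :=
  fun m => if (m : ℕ) % 2 = 0 then s ⟨(m : ℕ) / 2, by have := m.isLt; omega⟩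
    else t ⟨(m : ℕ) / 2, by have := m.isLt; omega⟩

/-- first projection from a `2k`-tuple -/
private def spl1 {k : ℕ} (g : Fin (2 * k) → ℕ) : Fin k → ℕ :=
  fun i => g ⟨2 * (i : ℕ), by have := i.isLt; omega⟩

/-- second projection from a `2k`-tuple -/
private def spl2 {k : ℕ} (g : Fin (2 * k) → ℕ) : Fin k → ℕ :=
  fun i => g ⟨2 * (i : ℕ) + 1, by have := i.isLt; omega⟩

private lemma spl1_zip {k : ℕ} (s t : Fin k → ℕ) : spl1 (zipPair s t) = s := by
  funext i
  simp only [spl1, zipPair]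
  rw [if_pos (by omega)]
  exact congrArg s (Fin.ext (by simp))

private lemma spl2_zip {k : ℕ} (s t : Fin k → ℕ) : spl2 (zipPair s t) = t := by
  funext i
  simp only [spl2, zipPair]
  rw [if_neg (by omega)]
  exact congrArg t (Fin.ext (by simp; omega))

private lemma zip_strictMono {k : ℕ} {M : Set ℕ} {s t : Fin k → ℕ}
    (h : IsPlegmaPair M s t) : StrictMono (zipPair s t) := by
  obtain ⟨hs, _⟩ := h.enum1
  obtain ⟨ht, _⟩ := h.enum2
  intro m m' hmm'
  have hab : (m : ℕ) < (m' : ℕ) := hmm'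
  have hbk : (m' : ℕ) < 2 * k := m'.isLt
  simp only [zipPair]
  by_cases h1 : (m : ℕ) % 2 = 0 <;> by_cases h2 : (m' : ℕ) % 2 = 0
  · rw [if_pos h1, if_pos h2]
    exact hs (show ((⟨(m : ℕ) / 2, _⟩ : Fin k)) < ⟨(m' : ℕ) / 2, _⟩ by
      simp [Fin.lt_def]; omega)
  · rw [if_pos h1, if_neg h2]
    refine lt_of_le_of_lt (hs.monotone (show ((⟨(m : ℕ) / 2, _⟩ : Fin k)) ≤ ⟨(m' : ℕ) / 2, _⟩
      by simp [Fin.le_def]; omega)) (h.col _)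
  · rw [if_neg h1, if_pos h2]
    have hq : (m : ℕ) / 2 + 1 < k ∨ (m : ℕ) / 2 + 1 = (m' : ℕ) / 2 + 0 ∧ False := by
      left; omega
    have hq' : (m : ℕ) / 2 + 1 ≤ (m' : ℕ) / 2 := by omega
    have hcr := h.cross ⟨(m : ℕ) / 2, by omega⟩ (by simp; omega)
    refine lt_of_lt_of_le hcr (hs.monotone ?_)
    simp [Fin.le_def]
    omega
  · rw [if_neg h1, if_neg h2]
    exact ht (show ((⟨(m : ℕ) / 2, _⟩ : Fin k)) < ⟨(m' : ℕ) / 2, _⟩ by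
      simp [Fin.lt_def]; omega)

private lemma zip_mem {k : ℕ} {M : Set ℕ} {s t : Fin k → ℕ}
    (h : IsPlegmaPair M s t) (m : Fin (2 * k)) : zipPair s t m ∈ M := by
  simp only [zipPair]
  split_ifs
  · exact h.enum1.2 _
  · exact h.enum2.2 _

end Aux

/-- If `k₁ < k₂` then for every infinite `M ⊆ ℕ` and every map
`φ : [M]^{k₁} → [ℕ]^{k₂}` there is an infinite `L ⊆ M` such that for every plegma pair
`(s₁, s₂)` in `[L]^{k₁}` neither `(φ s₁, φ s₂)` nor `(φ s₂, φ s₁)` is a plegma pair in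
`[ℕ]^{k₂}`; in particular no infinite `L ⊆ M` makes `φ` plegma preserving from
`[L]^{k₁}` into `[ℕ]^{k₂}`. -/
theorem statement4 (k₁ k₂ : ℕ) (hk₁ : 0 < k₁) (hk : k₁ < k₂) (M : ℕ → ℕ)
    (hM : StrictMono M) (φ : (Fin k₁ → ℕ) → (Fin k₂ → ℕ))
    (hφ : ∀ s, IsEnum (Set.range M) s → IsEnum Set.univ (φ s)) :
    (∃ L : ℕ → ℕ, StrictMono L ∧ Set.range L ⊆ Set.range M ∧
      ∀ s₁ s₂ : Fin k₁ → ℕ, IsPlegmaPair (Set.range L) s₁ s₂ →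
        ¬ IsPlegmaPair Set.univ (φ s₁) (φ s₂) ∧ ¬ IsPlegmaPair Set.univ (φ s₂) (φ s₁)) ∧
    ¬ ∃ L : ℕ → ℕ, StrictMono L ∧ Set.range L ⊆ Set.range M ∧
        ∀ (l : ℕ) (q : Fin l → Fin k₁ → ℕ), IsPlegma (Set.range L) q →
          IsPlegma Set.univ (fun j => φ (q j)) := by
  classical
  constructor
  · -- Ramsey part
    obtain ⟨L, hLm, hLsub, k₀, hhom⟩ := ramseyInf (κ := Bool × Bool) (2 * k₁)
      (fun g => (decide (IsPlegmaPair Set.univ (φ (spl1 g)) (φ (spl2 g))),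
                 decide (IsPlegmaPair Set.univ (φ (spl2 g)) (φ (spl1 g))))) M hM
    have key : ∀ s t : Fin k₁ → ℕ, IsPlegmaPair (Set.range L) s t →
        (decide (IsPlegmaPair Set.univ (φ s) (φ t)),
         decide (IsPlegmaPair Set.univ (φ t) (φ s))) = k₀ := by
      intro s t hst
      have := hhom (zipPair s t) (zip_strictMono hst) (zip_mem hst)
      rw [spl1_zip, spl2_zip] at this
      exact this
    obtain ⟨s₀, t₀, hp₀, hn₀⟩ := noForward hk₁ hk L hLm φ
    obtain ⟨s₁', t₁', hp₁, hn₁⟩ := noBackward hk₁ (hk₁.trans hk) L hLm φ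
    have hk1 : k₀.1 = false := by
      have := congrArg Prod.fst (key s₀ t₀ hp₀)
      simp only at this
      rw [← this]
      exact decide_eq_false hn₀
    have hk2 : k₀.2 = false := by
      have := congrArg Prod.snd (key s₁' t₁' hp₁)
      simp only at this
      rw [← this]
      exact decide_eq_false hn₁
    refine ⟨L, hLm, hLsub, ?_⟩
    intro s t hst
    have := key s t hst
    constructor
    · intro hcf
      have := congrArg Prod.fst this
      simp only at this
      rw [hk1] at this
      exact absurd this (by simp [hcf])
    · intro hcb
      have := congrArg Prod.snd this
      simp only at this
      rw [hk2] at this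
      exact absurd this (by simp [hcb])
  · -- second conjunct
    rintro ⟨L, hLm, _, hpres⟩
    obtain ⟨s, t, hp, hn⟩ := noForward hk₁ hk L hLm φ
    have := hpres 2 ![s, t] hp
    have heq : (fun j => φ (![s, t] j)) = ![φ s, φ t] := by
      funext j
      fin_cases j <;> simp
    rw [heq] at this
    exact hn this
end

section
/- Let A be a set, k ∈ ℕ, M an infinite subset of ℕ, and φ : [M]^k → A. Then there exists an infinite subset L of M such that either the restriction of φ to [L]^k is constant, or φ(s_1) ≠ φ(s_2) for every plegma pair (s_1, s_2) in [L]^k. -/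
/-!
Colour the `2k`-sets `u ⊆ M` twice by Ramsey's theorem: by whether `φ` agrees on the lower and
upper halves of `u`, and by whether `φ` agrees on the `k`-sets formed by the elements of `u` in
even and in odd position; the latter pairs are exactly the plegma pairs. On a homogeneous `L`, if
the halves always agree then `φ` is constant, as two `k`-sets can be compared with a third lying
above both. Otherwise the halves always differ, and then the even/odd pairs cannot always agree:
the plegma path `(L (2i + j))ᵢ`, `j = 0, …, 2k`, would join a `k`-set to one lying entirely above it.
-/

open Set

theorem IsEnum.mono_s5 {M N : Set ℕ} {k : ℕ} {s : Fin k → ℕ} (hs : IsEnum M s) (hMN : M ⊆ N) :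
    IsEnum N s :=
  ⟨hs.1, fun i => hMN (hs.2 i)⟩

theorem strictMono_fin_append {α : Type*} [Preorder α] {m n : ℕ} {s : Fin m → α} {w : Fin n → α}
    (hs : StrictMono s) (hw : StrictMono w) (hsw : ∀ i j, s i < w j) :
    StrictMono (Fin.append s w) := by
  intro a b hab
  induction a using Fin.addCases with
  | left i =>
    induction b using Fin.addCases with
    | left j => simpa using hs ((Fin.strictMono_castAdd n).lt_iff_lt.1 hab)
    | right j => simpa using hsw i j
  | right i =>
    induction b using Fin.addCases with
    | left j => exact absurd hab (by simp only [Fin.lt_def, Fin.val_natAdd, Fin.val_castAdd]; omega)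
    | right j => simpa using hw ((Fin.natAdd_lt_natAdd_iff m).1 hab)

theorem IsEnum.append {M : Set ℕ} {m n : ℕ} {s : Fin m → ℕ} {w : Fin n → ℕ} (hs : IsEnum M s)
    (hw : IsEnum M w) (hsw : ∀ i j, s i < w j) : IsEnum M (Fin.append s w) :=
  ⟨strictMono_fin_append hs.1 hw.1 hsw, Fin.addCases (by simpa using hs.2) (by simpa using hw.2)⟩

theorem exists_cons_monochromatic {C : Type*} {n : ℕ}
    (ih : ∀ (c : (Fin n → ℕ) → C) (M : Set ℕ), M.Infinite →
      ∃ L ⊆ M, L.Infinite ∧ ∃ x, ∀ s, IsEnum L s → c s = x)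
    (c : (Fin (n + 1) → ℕ) → C) {S : Set ℕ} (hS : S.Infinite) :
    ∃ a ∈ S, ∃ T ⊆ S ∩ Ioi a, T.Infinite ∧ ∃ x, ∀ s, IsEnum T s → c (Fin.cons a s) = x := by
  obtain ⟨a, ha⟩ := hS.nonempty
  have hSa : (S ∩ Ioi a).Infinite := by
    simpa only [sdiff_eq, compl_Iic] using hS.sdiff (finite_Iic a)
  exact ⟨a, ha, ih (fun s => c (Fin.cons a s)) _ hSa⟩

theorem exists_infinite_monochromatic {C : Type*} [Finite C] (n : ℕ) (c : (Fin n → ℕ) → C)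
    (M : Set ℕ) (hM : M.Infinite) : ∃ L ⊆ M, L.Infinite ∧ ∃ x, ∀ s, IsEnum L s → c s = x := by
  induction n generalizing M with
  | zero => exact ⟨M, subset_rfl, hM, c Fin.elim0, fun s _ => congrArg c (Subsingleton.elim _ _)⟩
  | succ n ih =>
    choose a ha T hT hTinf x hx using
      fun S : {S : Set ℕ // S.Infinite} => exists_cons_monochromatic ih c S.2
    let S : ℕ → {S : Set ℕ // S.Infinite} := fun i => (fun S => ⟨T S, hTinf S⟩)^[i] ⟨M, hM⟩
    have hS_succ (i : ℕ) : (S (i + 1)).1 = T (S i) := by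
      simp only [S, Function.iterate_succ_apply']
    have hS_anti : Antitone fun i => (S i).1 := antitone_nat_of_succ_le fun i =>
      (hS_succ i).trans_subset ((hT _).trans inter_subset_left)
    have ha_mono : StrictMono fun i => a (S i) := strictMono_nat_of_lt_succ fun i =>
      (hT _ ((hS_succ i) ▸ ha (S (i + 1)))).2
    obtain ⟨x₀, hx₀⟩ := Finite.exists_infinite_fiber fun i => x (S i)
    refine ⟨(fun i => a (S i)) '' (fun i => x (S i)) ⁻¹' {x₀}, ?_,
      (infinite_coe_iff.1 hx₀).image ha_mono.injective.injOn, x₀, ?_⟩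
    · rintro _ ⟨i, -, rfl⟩
      exact hS_anti (Nat.zero_le i) (ha (S i))
    · intro s hs
      obtain ⟨i, hi, hi0⟩ := hs.2 0
      have htail : IsEnum (T (S i)) (Fin.tail s) := by
        refine ⟨hs.1.comp Fin.strictMono_succ, fun j => ?_⟩
        obtain ⟨i', -, hi'⟩ := hs.2 j.succ
        have hii' : i < i' := by
          have := hs.1 (Fin.succ_pos j)
          rw [← hi0, ← hi'] at this
          exact ha_mono.lt_iff_lt.1 this
        rw [Fin.tail, ← hi', ← hS_succ]
        exact hS_anti hii' (ha _)
      rw [← Fin.cons_self_tail s, ← hi0, hx _ _ htail]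
      exact hi

theorem exists_strictMono_forall_or_forall_not {n : ℕ} (P : (Fin n → ℕ) → Prop) {M : ℕ → ℕ}
    (hM : StrictMono M) :
    ∃ L : ℕ → ℕ, StrictMono L ∧ range L ⊆ range M ∧
      ((∀ s, IsEnum (range L) s → P s) ∨ ∀ s, IsEnum (range L) s → ¬ P s) := by
  obtain ⟨L, hLM, hL, x, hx⟩ :=
    exists_infinite_monochromatic n P (range M) (infinite_range_of_injective hM.injective)
  have hrange : range (Nat.nth (· ∈ L)) = L := Nat.range_nth_of_infinite hL
  refine ⟨Nat.nth (· ∈ L), Nat.nth_strictMono hL, by rwa [hrange], ?_⟩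
  rw [hrange]
  by_cases hx' : x
  · exact Or.inl fun s hs => by rwa [hx s hs]
  · exact Or.inr fun s hs => by rwa [hx s hs]

theorem exists_isEnum_range_forall_gt {L : ℕ → ℕ} (hL : StrictMono L) (k B : ℕ) :
    ∃ w : Fin k → ℕ, IsEnum (range L) w ∧ ∀ j, B < w j :=
  ⟨fun j => L (B + 1 + j), ⟨hL.comp fun _ _ h => by simpa using h, fun _ => mem_range_self _⟩,
    fun j => (by omega : B < B + 1 + j).trans_le (hL.id_le _)⟩

section Interleave

variable {α : Type*} {k l : ℕ}

/-- Lists `p j i` in the order `p 0 0, …, p (l-1) 0, p 0 1, …`; for a plegma family `p` this is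
the increasing enumeration of the union of its members, and `strand` recovers the members. -/
def interleave (p : Fin l → Fin k → α) : Fin (k * l) → α :=
  fun r => p (finProdFinEquiv.symm r).2 (finProdFinEquiv.symm r).1

def strand (u : Fin (k * l) → α) (j : Fin l) : Fin k → α :=
  fun i => u (finProdFinEquiv (i, j))

@[simp]
theorem strand_interleave (p : Fin l → Fin k → α) : strand (interleave p) = p := by
  funext j i
  simp [strand, interleave]

end Interleave

theorem IsPlegma.lt_of_lt {M : Set ℕ} {k l : ℕ} {p : Fin l → Fin k → ℕ} (hp : IsPlegma M p)
    {i i' : Fin k} (hii' : i < i') (j j' : Fin l) : p j i < p j' i' :=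
  (hp.2.2 i (by omega) j j').trans_le ((hp.1 j').1.monotone (Fin.mk_le_of_le_val (by omega)))

theorem IsPlegma.isEnum_interleave {M : Set ℕ} {k l : ℕ} {p : Fin l → Fin k → ℕ}
    (hp : IsPlegma M p) : IsEnum M (interleave p) := by
  refine ⟨fun r r' hrr' => ?_, fun r => (hp.1 _).2 _⟩
  obtain ⟨⟨i, j⟩, rfl⟩ := finProdFinEquiv.surjective r
  obtain ⟨⟨i', j'⟩, rfl⟩ := finProdFinEquiv.surjective r'
  simp only [interleave, Equiv.symm_apply_apply]
  rw [Fin.lt_def, finProdFinEquiv_apply_val, finProdFinEquiv_apply_val] at hrr'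
  rcases lt_or_ge i i' with hii' | hi'i
  · exact hp.lt_of_lt hii' j j'
  · obtain rfl : i = i' := by
      refine le_antisymm (not_lt.1 fun hi'i => ?_) hi'i
      have : l * (i' + 1) ≤ l * i := Nat.mul_le_mul_left l (Fin.lt_def.1 hi'i)
      nlinarith [j.isLt, j'.isLt]
    exact hp.2.1 i (Fin.lt_def.2 (by simpa using hrr'))

section Colouring

variable {A : Type*} {k : ℕ} {L : ℕ → ℕ} (φ : (Fin k → ℕ) → A)

theorem apply_eq_of_forall_halves_eq (hL : StrictMono L)
    (h : ∀ u : Fin (k + k) → ℕ, IsEnum (range L) u → φ (u ∘ Fin.castAdd k) = φ (u ∘ Fin.natAdd k))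
    {s t : Fin k → ℕ} (hs : IsEnum (range L) s) (ht : IsEnum (range L) t) : φ s = φ t := by
  obtain ⟨B, hB⟩ := Finite.exists_le fun i => max (s i) (t i)
  obtain ⟨w, hw, hwB⟩ := exists_isEnum_range_forall_gt hL k B
  have hφw {v : Fin k → ℕ} (hv : IsEnum (range L) v) (hvB : ∀ i, v i ≤ B) : φ v = φ w := by
    simpa only [Function.comp_def, Fin.append_left, Fin.append_right] using
      h _ (hv.append hw fun i j => (hvB i).trans_lt (hwB j))
  rw [hφw hs fun i => (le_max_left _ _).trans (hB i),
    hφw ht fun i => (le_max_right _ _).trans (hB i)]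

/-- The `k`-sets `fun i => L (2 * i + j)`, `j = 0, 1, 2, …`, form a plegma path, so they all get the
same colour; for `j = 2 * k` the set lies entirely above the one for `j = 0`. -/
theorem exists_halves_eq_of_forall_strands_eq (hL : StrictMono L)
    (h : ∀ u : Fin (k * 2) → ℕ, IsEnum (range L) u → φ (strand u 0) = φ (strand u 1)) :
    ∃ u : Fin (k + k) → ℕ, IsEnum (range L) u ∧ φ (u ∘ Fin.castAdd k) = φ (u ∘ Fin.natAdd k) := by
  have hpath (j : ℕ) : φ (fun i => L (2 * i + j)) = φ (fun i => L (2 * i)) := by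
    induction j with
    | zero => rfl
    | succ j ih =>
      have hu : IsEnum (range L) fun r : Fin (k * 2) => L (r + j) :=
        ⟨hL.comp fun _ _ h => by simpa using h, fun _ => mem_range_self _⟩
      rw [← ih]
      convert (h _ hu).symm using 2 <;> funext i <;>
        simp only [strand, finProdFinEquiv_apply_val, Fin.val_zero, Fin.val_one, zero_add]
      congr 1
      ring
  refine ⟨fun r => L (2 * r), ⟨hL.comp fun _ _ h => by simpa using h, fun _ => mem_range_self _⟩,
    ?_⟩
  convert hpath (2 * k) |>.symm using 2 <;> funext i <;>
    simp only [Function.comp_apply, Fin.val_castAdd, Fin.val_natAdd]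
  congr 1
  ring

end Colouring

/-- For every map `φ` from `[M]^k` to a set `A` there is an infinite
`L ⊆ M` such that either `φ` is constant on `[L]^k` or `φ` takes different values on the
two members of every plegma pair in `[L]^k`. -/
theorem statement5 {A : Type*} (k : ℕ) (M : ℕ → ℕ) (hM : StrictMono M)
    (φ : (Fin k → ℕ) → A) :
    ∃ L : ℕ → ℕ, StrictMono L ∧ Set.range L ⊆ Set.range M ∧
      ((∀ s t : Fin k → ℕ, IsEnum (Set.range L) s → IsEnum (Set.range L) t → φ s = φ t) ∨
        (∀ s t : Fin k → ℕ, IsPlegmaPair (Set.range L) s t → φ s ≠ φ t)) := by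
  obtain ⟨L₁, hL₁, hL₁M, hhalves | hhalves⟩ := exists_strictMono_forall_or_forall_not
    (fun u : Fin (k + k) → ℕ => φ (u ∘ Fin.castAdd k) = φ (u ∘ Fin.natAdd k)) hM
  · exact ⟨L₁, hL₁, hL₁M, Or.inl fun s t => apply_eq_of_forall_halves_eq φ hL₁ hhalves⟩
  obtain ⟨L₂, hL₂, hL₂L₁, hstrands | hstrands⟩ := exists_strictMono_forall_or_forall_not
    (fun u : Fin (k * 2) → ℕ => φ (strand u 0) = φ (strand u 1)) hL₁
  · obtain ⟨u, hu, hφu⟩ := exists_halves_eq_of_forall_strands_eq φ hL₂ hstrands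
    exact absurd hφu (hhalves u (hu.mono_s5 hL₂L₁))
  refine ⟨L₂, hL₂, hL₂L₁.trans hL₁M, Or.inr fun s t hst => ?_⟩
  simpa using hstrands _ hst.isEnum_interleave
end

section
/- Let (E, ‖·‖_*) be a seminormed linear space and (e_n)_n a spreading sequence in E. Then the following are equivalent: (i) there exist n ∈ ℕ and a_1, …, a_n ∈ ℝ, not all zero, with ‖Σ_{i=1}^n a_i e_i‖_* = 0; (ii) ‖e_n − e_m‖_* = 0 for every n, m ∈ ℕ; (iii) ‖Σ_{i=1}^n a_i e_i‖_* = |Σ_{i=1}^n a_i| · ‖e_1‖_* for every n ∈ ℕ and a_1, …, a_n ∈ ℝ. -/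
/-!
If a nontrivial combination `∑ aᵢ eᵢ` is null, spread it twice: once along `2i`, and once
along `2i` except that the `j`-th vector (with `a j ≠ 0`) is moved to `2j + 1`. Both spread
copies are null, and their difference is `a j • (e (2j) - e (2j+1))`, so by spreading
`ρ (e 0 - e 1) = 0`, and then `ρ (e n - e m) = 0` for all `n, m`. In that case every `eᵢ`
is `e 0` modulo the null space of `ρ`, so `ρ (∑ aᵢ eᵢ) = ρ ((∑ aᵢ) • e 0)`.
-/

/-- The sequence `(e n)` is spreading with respect to the seminorm `ρ`. -/
def IsSpreadingWith {E : Type*} [AddCommGroup E] [Module ℝ E]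
    (ρ : Seminorm ℝ E) (e : ℕ → E) : Prop :=
  ∀ (n : ℕ) (a : Fin n → ℝ) (f : Fin n → ℕ), StrictMono f →
    ρ (∑ i, a i • e (i : ℕ)) = ρ (∑ i, a i • e (f i))

section Seminorm

variable {E : Type*} [AddCommGroup E] [Module ℝ E] (ρ : Seminorm ℝ E)

lemma Seminorm.map_eq_of_map_sub_eq_zero {x y : E} (h : ρ (x - y) = 0) : ρ x = ρ y := by
  have := abs_sub_map_le_sub ρ x y
  rw [h, abs_nonpos_iff, sub_eq_zero] at this
  exact this

lemma Seminorm.map_sub_eq_zero_of_map_eq_zero {x y : E} (hx : ρ x = 0) (hy : ρ y = 0) :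
    ρ (x - y) = 0 :=
  le_antisymm (by simpa [hx, hy] using map_sub_le_add ρ x y) (apply_nonneg ρ _)

lemma Seminorm.map_sum_smul_eq_of_map_sub_eq_zero {ι : Type*} (s : Finset ι) (a : ι → ℝ)
    (v : ι → E) {w : E} (h : ∀ i ∈ s, ρ (v i - w) = 0) :
    ρ (∑ i ∈ s, a i • v i) = |∑ i ∈ s, a i| * ρ w := by
  have hnull : ρ (∑ i ∈ s, a i • v i - (∑ i ∈ s, a i) • w) = 0 := by
    rw [Finset.sum_smul, ← Finset.sum_sub_distrib]
    refine le_antisymm ?_ (apply_nonneg ρ _)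
    calc ρ (∑ i ∈ s, (a i • v i - a i • w))
        ≤ ∑ i ∈ s, ρ (a i • (v i - w)) := by
          simpa only [smul_sub] using
            Finset.le_sum_of_subadditive ρ (map_zero ρ).le (map_add_le_add ρ) s _
      _ = 0 := Finset.sum_eq_zero fun i hi => by rw [map_smul_eq_mul, h i hi, mul_zero]
  rw [ρ.map_eq_of_map_sub_eq_zero hnull, map_smul_eq_mul, Real.norm_eq_abs]

end Seminorm

lemma Fin.sum_one_neg_one_smul {E : Type*} [AddCommGroup E] [Module ℝ E] (x : Fin 2 → E) :
    ∑ i, (![1, -1] : Fin 2 → ℝ) i • x i = x 0 - x 1 := by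
  simp [Fin.sum_univ_two, sub_eq_add_neg]

namespace IsSpreadingWith

variable {E : Type*} [AddCommGroup E] [Module ℝ E] {ρ : Seminorm ℝ E} {e : ℕ → E}

lemma map_sub_eq_map_sub_zero_one (hspr : IsSpreadingWith ρ e) {p q : ℕ} (hpq : p < q) :
    ρ (e p - e q) = ρ (e 0 - e 1) := by
  have hmono : StrictMono ![p, q] := by
    intro i j hij
    fin_cases i <;> fin_cases j <;> simp_all
  have h := hspr 2 ![1, -1] ![p, q] hmono
  rw [Fin.sum_one_neg_one_smul (fun i => e i), Fin.sum_one_neg_one_smul (fun i => e (![p, q] i))]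
    at h
  simpa using h.symm

lemma map_sub_eq_zero (hspr : IsSpreadingWith ρ e) (h01 : ρ (e 0 - e 1) = 0) (n m : ℕ) :
    ρ (e n - e m) = 0 := by
  rcases lt_trichotomy n m with h | rfl | h
  · rw [hspr.map_sub_eq_map_sub_zero_one h, h01]
  · simp
  · rw [← map_neg_eq_map, neg_sub, hspr.map_sub_eq_map_sub_zero_one h, h01]

lemma map_sub_zero_one_eq_zero_of_map_sum_eq_zero (hspr : IsSpreadingWith ρ e) {n : ℕ}
    {a : Fin n → ℝ} (h0 : ρ (∑ i, a i • e (i : ℕ)) = 0) {j : Fin n} (hj : a j ≠ 0) :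
    ρ (e 0 - e 1) = 0 := by
  set f : Fin n → ℕ := fun i => 2 * i
  set g : Fin n → ℕ := fun i => 2 * i + if i = j then 1 else 0
  have hf : StrictMono f := fun i i' (h : (i : ℕ) < i') => by simp only [f]; omega
  have hg : StrictMono g := fun i i' (h : (i : ℕ) < i') => by simp only [g]; split_ifs <;> omega
  have hdiff : ∑ i, a i • e (f i) - ∑ i, a i • e (g i) = a j • (e (2 * j) - e (2 * j + 1)) := by
    rw [← Finset.sum_sub_distrib, Finset.sum_eq_single j (fun i _ hij => by simp [f, g, hij])
      (fun h => absurd (Finset.mem_univ j) h)]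
    simp [f, g, smul_sub]
  have hnull : ρ (a j • (e (2 * j) - e (2 * j + 1))) = 0 := by
    rw [← hdiff]
    exact ρ.map_sub_eq_zero_of_map_eq_zero (by rwa [← hspr n a f hf]) (by rwa [← hspr n a g hg])
  rw [map_smul_eq_mul, mul_eq_zero, norm_eq_zero] at hnull
  rw [← hspr.map_sub_eq_map_sub_zero_one (Nat.lt_succ_self (2 * j))]
  exact hnull.resolve_left hj

end IsSpreadingWith

/-- For a spreading sequence `(e n)` in a seminormed linear space the
following are equivalent: (i) some nontrivial finite linear combination has seminorm 0;
(ii) `ρ (e n - e m) = 0` for all `n, m`; (iii) `ρ (∑ a_i • e_i) = |∑ a_i| * ρ (e 0)`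
for all finite coefficient sequences. -/
theorem statement6 {E : Type*} [AddCommGroup E] [Module ℝ E] (ρ : Seminorm ℝ E)
    (e : ℕ → E) (hspr : IsSpreadingWith ρ e) :
    ((∃ (n : ℕ) (a : Fin n → ℝ), (∃ i, a i ≠ 0) ∧ ρ (∑ i, a i • e (i : ℕ)) = 0) ↔
        (∀ n m : ℕ, ρ (e n - e m) = 0)) ∧
    ((∀ n m : ℕ, ρ (e n - e m) = 0) ↔
        (∀ (n : ℕ) (a : Fin n → ℝ),
          ρ (∑ i, a i • e (i : ℕ)) = |∑ i, a i| * ρ (e 0))) := by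
  have hpairs : (∀ n m : ℕ, ρ (e n - e m) = 0) ↔ ρ (e 0 - e 1) = 0 :=
    ⟨fun h => h 0 1, hspr.map_sub_eq_zero⟩
  rw [hpairs]
  refine ⟨⟨?_, fun h01 => ⟨2, ![1, -1], ⟨0, by simp⟩, ?_⟩⟩, ⟨fun h01 n a => ?_, fun h => ?_⟩⟩
  · rintro ⟨n, a, ⟨j, hj⟩, h0⟩
    exact hspr.map_sub_zero_one_eq_zero_of_map_sum_eq_zero h0 hj
  · rwa [Fin.sum_one_neg_one_smul (fun i => e i)]
  · exact ρ.map_sum_smul_eq_of_map_sub_eq_zero _ a _ fun i _ => hspr.map_sub_eq_zero h01 i 0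
  · simpa [Fin.sum_one_neg_one_smul (fun i => e i), Fin.sum_univ_two] using h 2 ![1, -1]
end

section
/- Let k_1, k_2 ∈ ℕ with 1 ≤ k_1 < k_2, X a Banach space, and (w_t)_{t∈[ℕ]^{k_1}} a k_1-sequence in X. Define the k_2-sequence (x_s)_{s∈[ℕ]^{k_2}} in X by x_s = w_{s|k_1}, where s|k_1 ∈ [ℕ]^{k_1} consists of the k_1 smallest elements of s. Then for every sequence (e_n)_n in a seminormed linear space, (w_t)_{t∈[ℕ]^{k_1}} admits (e_n)_n as a k_1-spreading model if and only if (x_s)_{s∈[ℕ]^{k_2}} admits (e_n)_n as a k_2-spreading model. -/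
/-- A null sequence of positive reals. -/
def IsNullPos (δ : ℕ → ℝ) : Prop :=
  (∀ n, 0 < δ n) ∧ Filter.Tendsto δ Filter.atTop (nhds 0)

/-- The `k`-subsequence `(x_s)_{s ∈ [M]^k}` generates `(e n)` (in the seminormed space
`(E, ρ)`) as a `k`-spreading model with respect to the null sequence `δ`: for all
`m ≤ l` (0-indexed), every plegma family `(p j)_{j=0}^{m}` in `[M]^k` whose first (hence
every) entry is `≥ M l`, and all coefficients in `[-1,1]`,
`| ‖∑ a_j • x_{p j}‖ - ρ (∑ a_j • e_j) | ≤ δ l`. The infinite set `M` is represented by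
its increasing enumeration. -/
def Generates {X : Type*} [SeminormedAddCommGroup X] [NormedSpace ℝ X]
    {E : Type*} [AddCommGroup E] [Module ℝ E] (ρ : Seminorm ℝ E)
    {k : ℕ} (x : (Fin k → ℕ) → X) (M : ℕ → ℕ) (e : ℕ → E) (δ : ℕ → ℝ) : Prop :=
  ∀ m l : ℕ, m ≤ l → ∀ p : Fin (m + 1) → Fin k → ℕ,
    IsPlegma (Set.range M) p →
    (∀ (j : Fin (m + 1)) (i : Fin k), M l ≤ p j i) →
    ∀ a : Fin (m + 1) → ℝ, (∀ j, a j ∈ Set.Icc (-1 : ℝ) 1) →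
      |‖∑ j, a j • x (p j)‖ - ρ (∑ j, a j • e (j : ℕ))| ≤ δ l



lemma extend_plegma {k₁ k₂ m : ℕ} (hk₁ : 0 < k₁) (hk : k₁ < k₂) (M : ℕ → ℕ)
    (hM : StrictMono M) (l : ℕ) (q : Fin (m + 1) → Fin k₁ → ℕ)
    (hq : IsPlegma (Set.range M) q) (hge : ∀ j i, M l ≤ q j i) :
    ∃ p : Fin (m + 1) → Fin k₂ → ℕ, IsPlegma (Set.range M) p ∧
      (∀ j i, M l ≤ p j i) ∧ ∀ j (i : Fin k₁), p j (Fin.castLE hk.le i) = q j i := by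
  obtain ⟨t, ht⟩ := (hq.1 (Fin.last m)).2 ⟨k₁ - 1, by omega⟩
  have hA : ∀ (j : Fin (m + 1)) (i : Fin k₁), q j i ≤ M t := by
    intro j i
    have h1 : q j i ≤ q j ⟨k₁ - 1, by omega⟩ :=
      (hq.1 j).1.monotone (by rw [Fin.le_def]; have := i.isLt; simp; omega)
    have h2 : q j ⟨k₁ - 1, by omega⟩ ≤ q (Fin.last m) ⟨k₁ - 1, by omega⟩ :=
      (hq.2.1 _).monotone (Fin.le_last j)
    rw [← ht] at *
    exact h1.trans h2
  refine ⟨fun j i => if h : (i : ℕ) < k₁ then q j ⟨i, h⟩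
      else M (t + 1 + ((i : ℕ) - k₁) * (m + 1) + (j : ℕ)), ⟨?_, ?_, ?_⟩, ?_, ?_⟩
  · intro j
    constructor
    · intro i i' hii'
      dsimp only
      by_cases h : (i : ℕ) < k₁ <;> by_cases h' : (i' : ℕ) < k₁
      · rw [dif_pos h, dif_pos h']
        exact (hq.1 j).1 (show ((⟨i, h⟩ : Fin k₁)) < ⟨i', h'⟩ from hii')
      · rw [dif_pos h, dif_neg h']
        exact lt_of_le_of_lt (hA j ⟨i, h⟩) (hM (by omega))
      · exact absurd (Fin.lt_def.mp hii') (by omega)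
      · rw [dif_neg h, dif_neg h']
        refine hM ?_
        have : ((i : ℕ) - k₁) * (m + 1) < ((i' : ℕ) - k₁) * (m + 1) :=
          (Nat.mul_lt_mul_right (Nat.succ_pos m)).mpr
            (by have := Fin.lt_def.mp hii'; omega)
        omega
    · intro i
      dsimp only
      by_cases h : (i : ℕ) < k₁
      · rw [dif_pos h]; exact (hq.1 j).2 _
      · rw [dif_neg h]; exact Set.mem_range_self _
  · intro i j j' hjj'
    dsimp only
    by_cases h : (i : ℕ) < k₁
    · rw [dif_pos h, dif_pos h]; exact hq.2.1 ⟨i, h⟩ hjj'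
    · rw [dif_neg h, dif_neg h]
      exact hM (by have := Fin.lt_def.mp hjj'; omega)
  · intro i hi j j'
    dsimp only
    by_cases h' : (i : ℕ) + 1 < k₁
    · rw [dif_pos (by omega : (i : ℕ) < k₁),
        dif_pos (show ((⟨(i:ℕ)+1, hi⟩ : Fin k₂) : ℕ) < k₁ from h')]
      exact hq.2.2 ⟨i, by omega⟩ h' j j'
    · by_cases h : (i : ℕ) < k₁
      · rw [dif_pos h, dif_neg (show ¬ ((⟨(i:ℕ)+1, hi⟩ : Fin k₂) : ℕ) < k₁ from h')]
        refine lt_of_le_of_lt (hA j ⟨i, h⟩) (hM ?_)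
        omega
      · rw [dif_neg h, dif_neg (show ¬ ((⟨(i:ℕ)+1, hi⟩ : Fin k₂) : ℕ) < k₁ by simp; omega)]
        refine hM ?_
        have h1 : ((i : ℕ) + 1 - k₁) * (m + 1) = ((i : ℕ) - k₁) * (m + 1) + (m + 1) := by
          rw [show (i : ℕ) + 1 - k₁ = ((i : ℕ) - k₁) + 1 by omega]; ring
        have := j.isLt
        omega
  · intro j i
    dsimp only
    by_cases h : (i : ℕ) < k₁
    · rw [dif_pos h]; exact hge j _
    · rw [dif_neg h]
      have h0 : M l ≤ M t := ht ▸ hge (Fin.last m) _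
      exact h0.trans (hM.monotone (by omega))
  · intro j i
    have hc : ((Fin.castLE hk.le i : Fin k₂) : ℕ) = (i : ℕ) := rfl
    dsimp only
    rw [dif_pos (hc ▸ i.isLt)]
    exact congrArg (q j) (Fin.ext hc)

/-- For `k₁ < k₂`, if the `k₂`-sequence `x` is defined from the
`k₁`-sequence `w` by `x s = w (s|k₁)` (restriction to the `k₁` smallest elements), then
`w` and `x` admit exactly the same spreading models (`w` as `k₁`-spreading models, `x`
as `k₂`-spreading models). -/
theorem statement8 {X : Type*} [NormedAddCommGroup X] [NormedSpace ℝ X] [CompleteSpace X]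
    (k₁ k₂ : ℕ) (hk₁ : 0 < k₁) (hk : k₁ < k₂)
    (w : (Fin k₁ → ℕ) → X) (x : (Fin k₂ → ℕ) → X)
    (hx : ∀ s : Fin k₂ → ℕ, x s = w fun i : Fin k₁ => s (Fin.castLE hk.le i)) :
    ∀ (E : Type*) [AddCommGroup E] [Module ℝ E] (ρ : Seminorm ℝ E) (e : ℕ → E),
      (∃ (M : ℕ → ℕ) (δ : ℕ → ℝ), StrictMono M ∧ IsNullPos δ ∧ Generates ρ w M e δ) ↔
      (∃ (M : ℕ → ℕ) (δ : ℕ → ℝ), StrictMono M ∧ IsNullPos δ ∧ Generates ρ x M e δ) := by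
  intro E _ _ ρ e
  constructor
  · rintro ⟨M, δ, hM, hδ, hG⟩
    refine ⟨M, δ, hM, hδ, ?_⟩
    intro m l hml p hp hge a ha
    have hq : IsPlegma (Set.range M)
        (fun (j : Fin (m + 1)) (i : Fin k₁) => p j (Fin.castLE hk.le i)) := by
      refine ⟨fun j => ⟨fun i i' hii' => (hp.1 j).1 (by
          rw [Fin.lt_def]; exact Fin.lt_def.mp hii'), fun i => (hp.1 j).2 _⟩,
        fun i j j' hjj' => hp.2.1 _ hjj', fun i hi j j' => ?_⟩
      exact hp.2.2 (Fin.castLE hk.le i) (by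
        have : ((Fin.castLE hk.le i : Fin k₂) : ℕ) = (i : ℕ) := rfl
        omega) j j'
    have := hG m l hml _ hq (fun j i => hge j _) a ha
    simpa only [hx] using this
  · rintro ⟨M, δ, hM, hδ, hG⟩
    refine ⟨M, δ, hM, hδ, ?_⟩
    intro m l hml q hq hge a ha
    obtain ⟨p, hp, hpge, hpq⟩ := extend_plegma hk₁ hk M hM l q hq hge
    have key := hG m l hml p hp hpge a ha
    have hxq : ∀ j, x (p j) = w (q j) := by
      intro j
      rw [hx]
      exact congrArg w (funext fun i => hpq j i)
    simpa only [hxq] using key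
end

section
/- Let (X, T) be a topological space, k ∈ ℕ, and (x_s)_{s∈[ℕ]^k} a k-sequence in X. Then for every infinite subset N of ℕ such that the closure of {x_s : s ∈ [N]^k} is a compact metrizable subspace of (X, T), there exists an infinite subset M of N such that (x_s)_{s∈[M]^k} is subordinated. -/
/-- The point of the Cantor space `{0,1}^ℕ` corresponding to the finite subset of `ℕ`
enumerated by `s`. -/
def enumChar {k : ℕ} (s : Fin k → ℕ) : ℕ → Bool := fun n => decide (∃ i, s i = n)

/-- The subset of the Cantor space `{0,1}^ℕ` corresponding to `[M]^{≤ k}`, the subsets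
of `M` of cardinality at most `k`. -/
def cantorLE (k : ℕ) (M : Set ℕ) : Set (ℕ → Bool) :=
  {f | ∃ (j : ℕ) (_ : j ≤ k) (s : Fin j → ℕ), IsEnum M s ∧ f = enumChar s}

/-- `(x s)_{s ∈ [M]^k}` converges to `x₀`: for every open `U ∋ x₀` all `x s` with
`s ∈ [M]^k` and `s(1) ≥ M m` (equivalently, all entries `≥ M m`) eventually lie in `U`. -/
def ConvergesTo {X : Type*} [TopologicalSpace X] {k : ℕ}
    (M : ℕ → ℕ) (x : (Fin k → ℕ) → X) (x₀ : X) : Prop :=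
  ∀ U : Set X, IsOpen U → x₀ ∈ U →
    ∃ m : ℕ, ∀ s : Fin k → ℕ, IsEnum (Set.range M) s → (∀ i, M m ≤ s i) → x s ∈ U

open Set Filter Topology PiNat

/-!
For a finite set `T` of heads and `ε > 0`, colour each finite `v` by the points of a finite
`ε/2`-net closest to `x (t ∪ v)`, `t ⊆ T`. Infinite Ramsey makes this colouring constant on
sets of equal size inside an infinite set, and diagonalising over `ε = 1/(n+1)` with heads below
`M n` yields `M ⊆ N` along which `x F` depends on `F ∈ [M]^k` only up to `ε` once `F` is fixed
below `M n`. In the Cantor space this says that `x` is Cauchy along the traces on `[M]^k` of the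
neighbourhoods of points of `[M]^{≤k}`, where `[M]^k` is dense; the closure is compact metric,
hence complete, so `x` extends continuously.
-/

theorem Set.Infinite.exists_strictMono_diagonal {L : Set ℕ} (hL : L.Infinite)
    (Q : ℕ → ℕ → Set ℕ → Prop)
    (hQ : ∀ n m (A : Set ℕ), A.Infinite → ∃ B ⊆ A, B.Infinite ∧ Q n m B) :
    ∃ M : ℕ → ℕ, StrictMono M ∧ range M ⊆ L ∧
      ∀ n, ∃ B, Q n (M n) B ∧ ∀ i, n < i → M i ∈ B := by
  choose! next hnext_sub hnext_inf hnext_Q using hQ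
  let S : ℕ → Set ℕ := fun n => Nat.rec L (fun n A => next n (sInf A) (A \ Iic (sInf A))) n
  have hS_inf (n : ℕ) : (S n).Infinite := by
    induction n with
    | zero => exact hL
    | succ n ih => exact hnext_inf _ _ _ (ih.sdiff (finite_Iic _))
  have hS_succ_sub (n : ℕ) : S (n + 1) ⊆ S n \ Iic (sInf (S n)) :=
    hnext_sub _ _ _ ((hS_inf n).sdiff (finite_Iic _))
  have hS_anti : Antitone S :=
    antitone_nat_of_succ_le fun n => (hS_succ_sub n).trans sdiff_subset
  have hmem (n : ℕ) : sInf (S n) ∈ S n := Nat.sInf_mem (hS_inf n).nonempty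
  refine ⟨fun n => sInf (S n), strictMono_nat_of_lt_succ fun n => ?_, ?_, fun n => ?_⟩
  · simpa using ((hS_succ_sub n) (hmem (n + 1))).2
  · rintro _ ⟨n, rfl⟩
    exact hS_anti (Nat.zero_le n) (hmem n)
  · exact ⟨S (n + 1), hnext_Q _ _ _ ((hS_inf n).sdiff (finite_Iic _)),
      fun i hi => hS_anti hi (hmem i)⟩

theorem Set.Infinite.exists_infinite_subset_monochromatic {κ : Type*} [Finite κ]
    {L : Set ℕ} (hL : L.Infinite) (k : ℕ) (c : Finset ℕ → κ) :
    ∃ L' ⊆ L, L'.Infinite ∧ ∃ a, ∀ s : Finset ℕ, ↑s ⊆ L' → s.card = k → c s = a := by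
  induction k generalizing L c with
  | zero =>
    exact ⟨L, subset_rfl, hL, c ∅, fun s _ hs => by rw [Finset.card_eq_zero.mp hs]⟩
  | succ k ih =>
    obtain ⟨M, hM, hML, hdiag⟩ := hL.exists_strictMono_diagonal
      (fun _ m B => ∃ a, ∀ s : Finset ℕ, ↑s ⊆ B → s.card = k → c (insert m s) = a)
      (fun _ m _ hA => ih hA fun s => c (insert m s))
    choose B hBQ hMB using hdiag
    choose a ha using hBQ
    obtain ⟨a₀, ha₀⟩ := Finite.exists_infinite_fiber a
    have hI : (a ⁻¹' {a₀}).Infinite := infinite_coe_iff.mp ha₀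
    refine ⟨M '' (a ⁻¹' {a₀}), (image_subset_range _ _).trans hML,
      hI.image hM.injective.injOn, a₀, fun s hs hcard => ?_⟩
    -- `s` is its minimum `M n`, where `a n = a₀`, inserted into a `k`-set inside `B n`.
    have hne : s.Nonempty := Finset.card_pos.mp (by omega)
    obtain ⟨n, hn, hMn⟩ := hs (s.min'_mem hne)
    have htail : ↑(s.erase (M n)) ⊆ B n := by
      intro r hr
      obtain ⟨hrn, hrs⟩ := Finset.mem_erase.mp hr
      obtain ⟨i, -, rfl⟩ := hs hrs
      refine hMB n i (hM.lt_iff_lt.mp ?_)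
      rw [hMn]
      exact lt_of_le_of_ne (s.min'_le _ hrs) (hMn ▸ hrn.symm)
    rw [← Finset.insert_erase (hMn ▸ s.min'_mem hne : M n ∈ s), ha n _ htail
      (by rw [Finset.card_erase_of_mem (hMn ▸ s.min'_mem hne)]; omega)]
    exact hn

theorem Set.Infinite.exists_infinite_subset_eq_of_card_eq {κ : Type*} [Finite κ]
    {L : Set ℕ} (hL : L.Infinite) (K : ℕ) (c : Finset ℕ → κ) :
    ∃ L' ⊆ L, L'.Infinite ∧ ∀ s t : Finset ℕ, ↑s ⊆ L' → ↑t ⊆ L' →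
      s.card = t.card → s.card ≤ K → c s = c t := by
  induction K generalizing L with
  | zero =>
    refine ⟨L, subset_rfl, hL, fun s t _ _ hst hs => ?_⟩
    rw [Finset.card_eq_zero.mp (by omega : s.card = 0),
      Finset.card_eq_zero.mp (by omega : t.card = 0)]
  | succ K ih =>
    obtain ⟨L₁, hL₁, hL₁_inf, hc₁⟩ := ih hL
    obtain ⟨L₂, hL₂, hL₂_inf, a, ha⟩ :=
      hL₁_inf.exists_infinite_subset_monochromatic (K + 1) c
    refine ⟨L₂, hL₂.trans hL₁, hL₂_inf, fun s t hs ht hst hsK => ?_⟩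
    rcases Nat.lt_or_eq_of_le hsK with hlt | heq
    · exact hc₁ s t (hs.trans hL₂) (ht.trans hL₂) hst (by omega)
    · rw [ha s hs heq, ha t ht (hst ▸ heq)]

theorem Set.Infinite.exists_infinite_subset_dist_union_lt {E : Type*} [PseudoMetricSpace E]
    [CompactSpace E] (y : Finset ℕ → E) (k : ℕ) (T : Finset ℕ) {ε : ℝ} (hε : 0 < ε)
    {L : Set ℕ} (hL : L.Infinite) :
    ∃ L' ⊆ L, L'.Infinite ∧ ∀ t ⊆ T, ∀ v w : Finset ℕ, ↑v ⊆ L' → ↑w ⊆ L' →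
      v.card = w.card → v.card ≤ k → dist (y (t ∪ v)) (y (t ∪ w)) < ε := by
  obtain ⟨D, -, hD, hcover⟩ :=
    finite_cover_balls_of_compact (isCompact_univ (X := E)) (half_pos hε)
  have : Finite D := hD
  have hnear (e : E) : ∃ d : D, dist e d < ε / 2 := by
    simpa using hcover (mem_univ e)
  choose near hnear using hnear
  obtain ⟨L', hL', hL'_inf, hc⟩ := hL.exists_infinite_subset_eq_of_card_eq k
    fun v (t : T.powerset) => near (y (t ∪ v))
  refine ⟨L', hL', hL'_inf, fun t ht v w hv hw hvw hvk => ?_⟩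
  have hsame : near (y (t ∪ v)) = near (y (t ∪ w)) :=
    congrFun (hc v w hv hw hvw hvk) ⟨t, Finset.mem_powerset.mpr ht⟩
  calc dist (y (t ∪ v)) (y (t ∪ w))
      ≤ dist (y (t ∪ v)) (near (y (t ∪ v))) + dist (y (t ∪ w)) (near (y (t ∪ w))) := by
        rw [hsame]; exact dist_triangle_right _ _ _
    _ < ε / 2 + ε / 2 := add_lt_add (hnear _) (hnear _)
    _ = ε := add_halves ε

theorem Set.Infinite.exists_strictMono_dist_lt_of_filter_lt_eq {E : Type*} [PseudoMetricSpace E]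
    [CompactSpace E] (y : Finset ℕ → E) (k : ℕ) {L : Set ℕ} (hL : L.Infinite) :
    ∃ M : ℕ → ℕ, StrictMono M ∧ range M ⊆ L ∧ ∀ ε > 0, ∃ R, ∀ F G : Finset ℕ,
      ↑F ⊆ range M → ↑G ⊆ range M → F.card = k → G.card = k →
      F.filter (· < R) = G.filter (· < R) → dist (y F) (y G) < ε := by
  obtain ⟨M, hM, hML, hdiag⟩ := hL.exists_strictMono_diagonal
    (fun n m B => ∀ t ⊆ Finset.range (m + 1), ∀ v w : Finset ℕ, ↑v ⊆ B → ↑w ⊆ B →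
      v.card = w.card → v.card ≤ k → dist (y (t ∪ v)) (y (t ∪ w)) < 1 / (n + 1))
    (fun n m _ hA => hA.exists_infinite_subset_dist_union_lt y k _ Nat.one_div_pos_of_nat)
  refine ⟨M, hM, hML, fun ε hε => ?_⟩
  obtain ⟨n, hn⟩ := exists_nat_one_div_lt hε
  obtain ⟨B, hB, hMB⟩ := hdiag n
  refine ⟨M n + 1, fun F G hF hG hFk hGk hFG => ?_⟩
  -- `F` and `G` share their head below `M n + 1`, and their tails lie in `B`.
  have htail {H : Finset ℕ} (hH : ↑H ⊆ range M) : ↑(H.filter (¬ · < M n + 1)) ⊆ B := by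
    intro r hr
    obtain ⟨hrH, hr⟩ := Finset.mem_filter.mp hr
    obtain ⟨i, rfl⟩ := hH hrH
    exact hMB i (hM.lt_iff_lt.mp (by omega))
  have hcard {H : Finset ℕ} (hH : H.card = k) :
      (H.filter (¬ · < M n + 1)).card = k - (H.filter (· < M n + 1)).card := by
    rw [← hH, ← Finset.card_filter_add_card_filter_not (s := H) (· < M n + 1)]
    omega
  have hhead : F.filter (· < M n + 1) ⊆ Finset.range (M n + 1) := fun r hr =>
    Finset.mem_range.mpr (Finset.mem_filter.mp hr).2
  rw [← Finset.filter_union_filter_not_eq (p := (· < M n + 1)) F,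
    ← Finset.filter_union_filter_not_eq (p := (· < M n + 1)) G, ← hFG]
  refine (hB _ hhead _ _ (htail hF) (htail hG) ?_ ?_).trans hn
  · rw [hcard hFk, hcard hGk, hFG]
  · rw [hcard hFk]; omega

theorem exists_continuousOn_eqOn_of_cauchy_map {X Y : Type*} [TopologicalSpace X]
    [UniformSpace Y] [CompleteSpace Y] [T2Space Y] {f : X → Y} {A B : Set X} (hAB : A ⊆ B)
    (hB : B ⊆ closure A) (hf : ∀ b ∈ B, Cauchy (map f (𝓝[A] b))) :
    ∃ φ : X → Y, ContinuousOn φ B ∧ EqOn φ f A := by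
  refine ⟨extendFrom A f, continuousOn_extendFrom hB fun b hb => CompleteSpace.complete (hf b hb),
    fun a ha => extendFrom_eq (subset_closure ha) ?_⟩
  have : ClusterPt (f a) (map f (𝓝[A] a)) :=
    (ClusterPt.of_le_nhds (pure_le_nhds (f a))).mono (map_mono (pure_le_nhdsWithin ha))
  exact le_nhds_of_cauchy_adhp (hf a (hAB ha)) this

theorem Finset.boolIndicator_injective :
    Function.Injective fun F : Finset ℕ => (F : Set ℕ).boolIndicator := by
  intro F G h
  have := congrArg (· ⁻¹' {true}) h
  simp only [Set.preimage_boolIndicator_true] at this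
  exact_mod_cast this

theorem Finset.boolIndicator_mem_cylinder_iff {F G : Finset ℕ} {R : ℕ} :
    (F : Set ℕ).boolIndicator ∈ cylinder (G : Set ℕ).boolIndicator R ↔
      F.filter (· < R) = G.filter (· < R) := by
  have hbool (i : ℕ) :
      (F : Set ℕ).boolIndicator i = (G : Set ℕ).boolIndicator i ↔ (i ∈ F ↔ i ∈ G) := by
    rw [Bool.eq_iff_iff, ← Set.mem_iff_boolIndicator, ← Set.mem_iff_boolIndicator,
      Finset.mem_coe, Finset.mem_coe]
  simp only [mem_cylinder_iff, hbool, Finset.ext_iff, Finset.mem_filter]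
  grind

theorem Set.Infinite.image_boolIndicator_card_le_subset_closure {L : Set ℕ} (hL : L.Infinite)
    (k : ℕ) :
    (fun F : Finset ℕ => (F : Set ℕ).boolIndicator) '' {F | ↑F ⊆ L ∧ F.card ≤ k} ⊆
      closure
        ((fun F : Finset ℕ => (F : Set ℕ).boolIndicator) '' {F | ↑F ⊆ L ∧ F.card = k}) := by
  rintro _ ⟨F, ⟨hFL, hFk⟩, rfl⟩
  rw [(isTopologicalBasis_cylinders _).mem_closure_iff]
  rintro _ ⟨g, R, rfl⟩ hF
  rw [← mem_cylinder_iff_eq.mp hF]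
  obtain ⟨G, hG, hGcard⟩ :=
    (hL.sdiff ((finite_Iio R).union F.finite_toSet)).exists_subset_card_eq (k - F.card)
  have hdisj : Disjoint F G := Finset.disjoint_left.mpr fun r hrF hrG => (hG hrG).2 (Or.inr hrF)
  refine ⟨_, Finset.boolIndicator_mem_cylinder_iff.mpr ?_, F ∪ G,
    ⟨by simp [hFL, hG.trans sdiff_subset], by rw [Finset.card_union_of_disjoint hdisj]; omega⟩, rfl⟩
  rw [Finset.filter_union,
    Finset.filter_false_of_mem (p := (· < R)) fun r hr hrR => (hG hr).2 (Or.inl hrR),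
    Finset.union_empty]

theorem Set.Infinite.exists_strictMono_continuousOn_extension {E : Type*} [MetricSpace E]
    [CompactSpace E] (k : ℕ) (y : Finset ℕ → E) {L : Set ℕ} (hL : L.Infinite) :
    ∃ M : ℕ → ℕ, StrictMono M ∧ range M ⊆ L ∧ ∃ φ : (ℕ → Bool) → E,
      ContinuousOn φ
        ((fun F : Finset ℕ => (F : Set ℕ).boolIndicator) '' {F | ↑F ⊆ range M ∧ F.card ≤ k}) ∧
      ∀ F : Finset ℕ, ↑F ⊆ range M → F.card = k → φ (F : Set ℕ).boolIndicator = y F := by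
  obtain ⟨M, hM, hML, hstable⟩ := hL.exists_strictMono_dist_lt_of_filter_lt_eq y k
  let χ := fun F : Finset ℕ => (F : Set ℕ).boolIndicator
  let A := χ '' {F | ↑F ⊆ range M ∧ F.card = k}
  let f : (ℕ → Bool) → E := Function.extend χ y fun _ => y ∅
  have hf (F : Finset ℕ) : f (χ F) = y F := Finset.boolIndicator_injective.extend_apply _ _ _
  have hclosure :=
    (infinite_range_of_injective hM.injective).image_boolIndicator_card_le_subset_closure k
  have hcauchy (b : ℕ → Bool) (hb : b ∈ closure A) : Cauchy (map f (𝓝[A] b)) := by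
    have := mem_closure_iff_nhdsWithin_neBot.mp hb
    refine Metric.cauchy_iff.mpr ⟨inferInstance, fun ε hε => ?_⟩
    obtain ⟨R, hR⟩ := hstable ε hε
    refine ⟨f '' (A ∩ cylinder b R), image_mem_map (inter_mem_nhdsWithin A
      ((isOpen_cylinder _ b R).mem_nhds (self_mem_cylinder b R))), ?_⟩
    rintro _ ⟨_, ⟨⟨F, ⟨hF, hFk⟩, rfl⟩, hFb⟩, rfl⟩ _ ⟨_, ⟨⟨G, ⟨hG, hGk⟩, rfl⟩, hGb⟩, rfl⟩
    rw [hf, hf]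
    refine hR F G hF hG hFk hGk (Finset.boolIndicator_mem_cylinder_iff.mp ?_)
    exact fun i hi => (hFb i hi).trans (hGb i hi).symm
  have hAB : A ⊆ χ '' {F | ↑F ⊆ range M ∧ F.card ≤ k} :=
    image_mono fun _ hF => ⟨hF.1, hF.2.le⟩
  obtain ⟨φ, hφ, hφf⟩ := exists_continuousOn_eqOn_of_cauchy_map hAB hclosure
    fun b hb => hcauchy b (hclosure hb)
  refine ⟨M, hM, hML, φ, hφ, fun F hF hFk => ?_⟩
  have hFA : χ F ∈ A := ⟨F, ⟨hF, hFk⟩, rfl⟩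
  exact (hφf hFA).trans (hf F)

theorem enumChar_eq_boolIndicator {k : ℕ} (s : Fin k → ℕ) :
    enumChar s = (↑(Finset.univ.image s) : Set ℕ).boolIndicator := by
  funext n
  rw [Bool.eq_iff_iff, ← Set.mem_iff_boolIndicator]
  simp [enumChar]

theorem isEnum_orderEmbOfFin {L : Set ℕ} {F : Finset ℕ} (hF : ↑F ⊆ L) {k : ℕ}
    (h : F.card = k) : IsEnum L (F.orderEmbOfFin h) :=
  ⟨(F.orderEmbOfFin h).strictMono, fun i => hF (F.orderEmbOfFin_mem h i)⟩

theorem IsEnum.coe_image_subset {L : Set ℕ} {k : ℕ} {s : Fin k → ℕ} (hs : IsEnum L s) :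
    ↑(Finset.univ.image s) ⊆ L := by
  simpa [Set.subset_def] using hs.2

theorem IsEnum.card_image {L : Set ℕ} {k : ℕ} {s : Fin k → ℕ} (hs : IsEnum L s) :
    (Finset.univ.image s).card = k := by
  rw [Finset.card_image_of_injective _ hs.1.injective, Finset.card_univ, Fintype.card_fin]

theorem IsEnum.orderEmbOfFin_image {L : Set ℕ} {k : ℕ} {s : Fin k → ℕ} (hs : IsEnum L s) :
    ((Finset.univ.image s).orderEmbOfFin hs.card_image : Fin k → ℕ) = s :=
  (Finset.orderEmbOfFin_unique _ (fun i => Finset.mem_image_of_mem s (Finset.mem_univ i))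
    hs.1).symm

theorem cantorLE_eq_image (k : ℕ) (L : Set ℕ) :
    cantorLE k L =
      (fun F : Finset ℕ => (F : Set ℕ).boolIndicator) '' {F | ↑F ⊆ L ∧ F.card ≤ k} := by
  ext g
  constructor
  · rintro ⟨j, hj, s, hs, rfl⟩
    exact ⟨_, ⟨hs.coe_image_subset, hs.card_image.le.trans hj⟩,
      (enumChar_eq_boolIndicator s).symm⟩
  · rintro ⟨F, ⟨hF, hFk⟩, rfl⟩
    refine ⟨F.card, hFk, F.orderEmbOfFin rfl, isEnum_orderEmbOfFin hF rfl, ?_⟩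
    rw [enumChar_eq_boolIndicator, Finset.image_orderEmbOfFin_univ]

/-- If the closure of `{x s : s ∈ [N]^k}` is a compact metrizable
subspace of `X`, then there is an infinite `M ⊆ N` such that `(x s)_{s ∈ [M]^k}` is
subordinated, i.e. extends to a continuous map on `[M]^{≤k}`. -/
theorem statement10 {X : Type*} [TopologicalSpace X] (k : ℕ) (x : (Fin k → ℕ) → X)
    (N : ℕ → ℕ) (hN : StrictMono N)
    (hcpt : IsCompact (closure (x '' {s | IsEnum (Set.range N) s})))
    (hmetr : TopologicalSpace.MetrizableSpace
      ↥(closure (x '' {s | IsEnum (Set.range N) s}))) :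
    ∃ M : ℕ → ℕ, StrictMono M ∧ Set.range M ⊆ Set.range N ∧
      ∃ φ : (ℕ → Bool) → X, ContinuousOn φ (cantorLE k (Set.range M)) ∧
        ∀ s : Fin k → ℕ, IsEnum (Set.range M) s → φ (enumChar s) = x s := by
  classical
  set C := closure (x '' {s | IsEnum (Set.range N) s})
  let := TopologicalSpace.metrizableSpaceMetric C
  have : CompactSpace C := isCompact_iff_compactSpace.mp hcpt
  have hxC {s : Fin k → ℕ} (hs : IsEnum (range N) s) : x s ∈ C := subset_closure ⟨s, hs, rfl⟩
  have hN_inf := infinite_range_of_injective hN.injective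
  obtain ⟨F₀, hF₀, hF₀k⟩ := hN_inf.exists_subset_card_eq k
  let y : Finset ℕ → C := fun F =>
    if h : ↑F ⊆ range N ∧ F.card = k then ⟨_, hxC (isEnum_orderEmbOfFin h.1 h.2)⟩
    else ⟨_, hxC (isEnum_orderEmbOfFin hF₀ hF₀k)⟩
  obtain ⟨M, hM, hMN, φ, hφ, hφy⟩ := hN_inf.exists_strictMono_continuousOn_extension k y
  refine ⟨M, hM, hMN, fun g => φ g, ?_, fun s hs => ?_⟩
  · rw [cantorLE_eq_image]
    exact continuous_subtype_val.comp_continuousOn hφ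
  · have hsN : IsEnum (range N) s := ⟨hs.1, fun i => hMN (hs.2 i)⟩
    change (φ (enumChar s) : X) = x s
    rw [enumChar_eq_boolIndicator, hφy _ hs.coe_image_subset hs.card_image]
    simp only [y, dif_pos (And.intro hsN.coe_image_subset hs.card_image)]
    exact congrArg x hsN.orderEmbOfFin_image
end

section
/- Let X be a Banach space, k ∈ ℕ, (x_s)_{s∈[ℕ]^k} a k-sequence in X, and x_0 ∈ X. Let x'_s = x_s − x_0 for all s ∈ [ℕ]^k, and assume that (x_s)_{s∈[ℕ]^k} generates a k-spreading model (e_n)_n and (x'_s)_{s∈[ℕ]^k} generates a k-spreading model (ẽ_n)_n (both with M = ℕ, each with respect to some null sequence of positive reals). Then: (a) ‖Σ_{i=1}^n a_i e_i‖_* = ‖Σ_{i=1}^n a_i ẽ_i‖_{**} for every n ∈ ℕ and a_1, …, a_n ∈ ℝ with Σ_{i=1}^n a_i = 0; and (c) (e_n)_n is equivalent to the usual basis of ℓ^1 if and only if (ẽ_n)_n is equivalent to the usual basis of ℓ^1. -/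
/-- `(e n)` admits a lower `ℓ¹`-estimate of constant `c` with respect to the
seminorm `ρ`. -/
def LowerL1 {E : Type*} [AddCommGroup E] [Module ℝ E]
    (ρ : Seminorm ℝ E) (e : ℕ → E) (c : ℝ) : Prop :=
  ∀ (n : ℕ) (a : Fin n → ℝ), c * ∑ i, |a i| ≤ ρ (∑ i, a i • e (i : ℕ))

/-- `(e n)` is equivalent to the usual basis of `ℓ¹` with respect to the seminorm `ρ`. -/
def EquivL1Basis {E : Type*} [AddCommGroup E] [Module ℝ E]
    (ρ : Seminorm ℝ E) (e : ℕ → E) : Prop :=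
  ∃ c C : ℝ, 0 < c ∧ c ≤ C ∧ LowerL1 ρ e c ∧
    ∀ (n : ℕ) (a : Fin n → ℝ), ρ (∑ i, a i • e (i : ℕ)) ≤ C * ∑ i, |a i|

open Filter Topology

/-- For `o + m < w`, the `i`-th coordinates of the family `j ↦ plegmaBlock l w (o + j)`, `j ≤ m`,
fill part of the block `[l + i w, l + (i + 1) w)`, so the family is plegma. -/
def plegmaBlock {k : ℕ} (l w j : ℕ) : Fin k → ℕ := fun i => l + i * w + j

lemma isPlegma_plegmaBlock (k : ℕ) {m w o : ℕ} (how : o + m < w) (l : ℕ) :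
    IsPlegma (Set.range fun n => n)
      (fun j : Fin (m + 1) => (plegmaBlock l w (o + j) : Fin k → ℕ)) := by
  have hw : ∀ i : ℕ, (i + 1) * w = i * w + w := fun i => by ring
  refine ⟨fun j => ⟨fun i i' hii => ?_, fun i => ⟨_, rfl⟩⟩, fun i j j' hjj => ?_,
    fun i hi j j' => ?_⟩
  · have : ((i : ℕ) + 1) * w ≤ i' * w := Nat.mul_le_mul_right w hii
    simp only [plegmaBlock]
    linarith [hw i, j.isLt]
  · simp only [plegmaBlock]
    have : (j : ℕ) < j' := hjj
    omega
  · simp only [plegmaBlock]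
    linarith [hw i, j.isLt]

lemma exists_eq_pos_smul_of_abs_le_one {n : ℕ} (a : Fin n → ℝ) :
    ∃ S : ℝ, 0 < S ∧ ∃ u : Fin n → ℝ, (∀ j, |u j| ≤ 1) ∧ a = S • u := by
  have hS : 0 < 1 + ∑ i, |a i| := by positivity
  refine ⟨_, hS, (1 + ∑ i, |a i|)⁻¹ • a, fun j => ?_, by rw [smul_inv_smul₀ hS.ne']⟩
  rw [Pi.smul_apply, smul_eq_mul, abs_mul, abs_inv, abs_of_pos hS, inv_mul_le_iff₀ hS, mul_one]
  linarith [Finset.single_le_sum (fun i _ => abs_nonneg (a i)) (Finset.mem_univ j)]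

lemma sum_smul_sub_const_of_sum_eq_zero {V ι : Type*} [AddCommGroup V] [Module ℝ V]
    (s : Finset ι) {u : ι → ℝ} (hu : ∑ i ∈ s, u i = 0) (v : ι → V) (x₀ : V) :
    ∑ i ∈ s, u i • (v i - x₀) = ∑ i ∈ s, u i • v i := by
  simp [smul_sub, Finset.sum_sub_distrib, ← Finset.sum_smul, hu]

lemma sum_append_neg_smul {V : Type*} [AddCommGroup V] [Module ℝ V] {n : ℕ} (a : Fin n → ℝ)
    (f : ℕ → V) :
    ∑ j : Fin (n + n), Fin.append a (-a) j • f j = ∑ j, a j • (f j - f (n + j)) := by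
  simp only [Fin.sum_univ_add, Fin.append_left, Fin.append_right, Fin.val_castAdd,
    Fin.val_natAdd, Pi.neg_apply, neg_smul, Finset.sum_neg_distrib, smul_sub,
    Finset.sum_sub_distrib, ← sub_eq_add_neg]

lemma seminorm_sum_smul_smul {E : Type*} [AddCommGroup E] [Module ℝ E] {n : ℕ}
    (ρ : Seminorm ℝ E) (v : Fin n → E) {S : ℝ} (hS : 0 < S) (u : Fin n → ℝ) :
    ρ (∑ i, (S • u) i • v i) = S * ρ (∑ i, u i • v i) := by
  simp only [Pi.smul_apply, smul_eq_mul, mul_smul, ← Finset.smul_sum, map_smul_eq_mul,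
    Real.norm_of_nonneg hS.le]

section GeneratedModel

variable {X : Type*} [SeminormedAddCommGroup X] [NormedSpace ℝ X]
  {E E' : Type*} [AddCommGroup E] [Module ℝ E] [AddCommGroup E'] [Module ℝ E']
  {ρ : Seminorm ℝ E} {ρ' : Seminorm ℝ E'} {k : ℕ} {x x' : (Fin k → ℕ) → X}
  {e : ℕ → E} {e' : ℕ → E'} {δ δ' : ℕ → ℝ}

theorem Generates.tendsto_norm_sum (hgen : Generates ρ x (fun n => n) e δ)
    (hδ : Tendsto δ atTop (𝓝 0)) {m w o : ℕ} (how : o + m < w) {a : Fin (m + 1) → ℝ}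
    (ha : ∀ j, |a j| ≤ 1) :
    Tendsto (fun l => ‖∑ j, a j • x (plegmaBlock l w (o + j))‖) atTop
      (𝓝 (ρ (∑ j, a j • e j))) := by
  refine (tendsto_iff_dist_tendsto_zero).2 (squeeze_zero' (Eventually.of_forall
    fun _ => dist_nonneg) ?_ hδ)
  filter_upwards [eventually_ge_atTop m] with l hml
  exact hgen m l hml _ (isPlegma_plegmaBlock k how l)
    (fun j i => (Nat.le_add_right _ _).trans (Nat.le_add_right _ _)) a
    fun j => abs_le.1 (ha j)

theorem seminorm_sum_eq_of_sum_eq_zero (hgen : Generates ρ x (fun n => n) e δ)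
    (hgen' : Generates ρ' x' (fun n => n) e' δ') {x₀ : X} (hx' : ∀ s, x' s = x s - x₀)
    (hδ : Tendsto δ atTop (𝓝 0)) (hδ' : Tendsto δ' atTop (𝓝 0)) {n : ℕ} {a : Fin n → ℝ}
    (ha : ∑ i, a i = 0) : ρ (∑ i, a i • e i) = ρ' (∑ i, a i • e' i) := by
  obtain _ | m := n
  · simp
  obtain ⟨S, hS, u, hu, rfl⟩ := exists_eq_pos_smul_of_abs_le_one a
  have hu0 : ∑ i, u i = 0 := by
    simpa [← Finset.mul_sum, hS.ne'] using ha
  rw [seminorm_sum_smul_smul ρ _ hS, seminorm_sum_smul_smul ρ' _ hS]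
  have hlim := hgen'.tendsto_norm_sum hδ' (o := 0) (w := m + 1) (by omega) hu
  simp only [hx', sum_smul_sub_const_of_sum_eq_zero _ hu0] at hlim
  rw [tendsto_nhds_unique (hgen.tendsto_norm_sum hδ (by omega) hu) hlim]

theorem Generates.seminorm_apply_eq (hgen : Generates ρ x (fun n => n) e δ)
    (hδ : Tendsto δ atTop (𝓝 0)) (i : ℕ) : ρ (e i) = ρ (e 0) := by
  have hlast := hgen.tendsto_norm_sum hδ (o := 0) (w := i + 1) (by omega)
    (a := Pi.single (Fin.last i) 1) fun j => by
      by_cases h : j = Fin.last i <;> simp [h]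
  have hfirst := hgen.tendsto_norm_sum hδ (m := 0) (o := i) (w := i + 1) (by omega)
    (a := fun _ => 1) fun _ => by simp
  -- both families consist of the single point `x (plegmaBlock l (i + 1) i)`
  simp only [Pi.single_apply, ite_smul, one_smul, zero_smul, Finset.sum_ite_eq',
    Finset.mem_univ, if_true, Fin.val_last, zero_add] at hlast
  simp only [Fin.sum_univ_succ, Fin.sum_univ_zero, one_smul, Fin.val_zero, add_zero] at hfirst
  exact tendsto_nhds_unique hlast hfirst

theorem Generates.seminorm_sum_le (hgen : Generates ρ x (fun n => n) e δ)
    (hδ : Tendsto δ atTop (𝓝 0)) {n : ℕ} (a : Fin n → ℝ) :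
    ρ (∑ i, a i • e i) ≤ ρ (e 0) * ∑ i, |a i| :=
  calc ρ (∑ i, a i • e i) ≤ ∑ i, ρ (a i • e i) :=
        Finset.le_sum_of_subadditive ρ (map_zero ρ).le (map_add_le_add ρ) _ _
    _ = ρ (e 0) * ∑ i, |a i| := by
        simp only [map_smul_eq_mul, Real.norm_eq_abs, hgen.seminorm_apply_eq hδ,
          Finset.mul_sum, mul_comm]

theorem Generates.seminorm_sum_sub_shift_le (hgen : Generates ρ x (fun n => n) e δ)
    (hδ : Tendsto δ atTop (𝓝 0)) {n : ℕ} (a : Fin n → ℝ) :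
    ρ (∑ i, a i • (e i - e (n + i))) ≤ 2 * ρ (∑ i, a i • e i) := by
  obtain _ | m := n
  · simp
  obtain ⟨S, hS, u, hu, rfl⟩ := exists_eq_pos_smul_of_abs_le_one a
  rw [seminorm_sum_smul_smul ρ _ hS, seminorm_sum_smul_smul ρ _ hS, mul_left_comm]
  refine mul_le_mul_of_nonneg_left ?_ hS.le
  have hb : ∀ j, |Fin.append u (-u) j| ≤ 1 := Fin.addCases
    (fun i => by rw [Fin.append_left]; exact hu i)
    (fun i => by rw [Fin.append_right, Pi.neg_apply, abs_neg]; exact hu i)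
  -- the family carrying `(u, -u)` is the family carrying `u` followed by its shift by `m + 1`
  have hsub : Tendsto (fun l => ‖∑ j : Fin (m + 1 + (m + 1)),
      Fin.append u (-u) j • x (plegmaBlock l (m + 1 + (m + 1)) (0 + j))‖) atTop
      (𝓝 (ρ (∑ j : Fin (m + 1 + (m + 1)), Fin.append u (-u) j • e j))) :=
    hgen.tendsto_norm_sum hδ (m := m + 1 + m) (o := 0) (w := m + 1 + (m + 1))
      (by omega) hb
  have hleft := hgen.tendsto_norm_sum hδ (o := 0) (w := m + 1 + (m + 1)) (by omega) hu
  have hright := hgen.tendsto_norm_sum hδ (o := m + 1) (w := m + 1 + (m + 1)) (by omega) hu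
  simp only [zero_add, sum_append_neg_smul] at hsub hleft
  rw [two_mul]
  refine le_of_tendsto_of_tendsto' hsub (hleft.add hright) fun l => ?_
  rw [sum_append_neg_smul u fun j => x (plegmaBlock l (m + 1 + (m + 1)) j)]
  simpa only [smul_sub, Finset.sum_sub_distrib] using norm_sub_le (E := X) _ _

theorem LowerL1.of_seminorm_eq_of_sum_eq_zero (hgen : Generates ρ x (fun n => n) e δ)
    (hδ : Tendsto δ atTop (𝓝 0))
    (heq : ∀ (n : ℕ) (a : Fin n → ℝ), ∑ i, a i = 0 → ρ (∑ i, a i • e i) = ρ' (∑ i, a i • e' i))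
    {c : ℝ} (hc : LowerL1 ρ' e' c) : LowerL1 ρ e c := by
  intro n a
  have hsum : ∑ j, Fin.append a (-a) j = 0 := by
    simp only [Fin.sum_univ_add, Fin.append_left, Fin.append_right, Pi.neg_apply,
      Finset.sum_neg_distrib, add_neg_cancel]
  have hlow := hc _ (Fin.append a (-a))
  rw [← heq _ _ hsum, sum_append_neg_smul, Fin.sum_univ_add] at hlow
  simp only [Fin.append_left, Fin.append_right, Pi.neg_apply, abs_neg] at hlow
  linarith [hgen.seminorm_sum_sub_shift_le hδ a]

theorem Generates.equivL1Basis_iff (hgen : Generates ρ x (fun n => n) e δ)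
    (hδ : Tendsto δ atTop (𝓝 0)) : EquivL1Basis ρ e ↔ ∃ c, 0 < c ∧ LowerL1 ρ e c := by
  refine ⟨fun ⟨c, _, hc, _, hlow, _⟩ => ⟨c, hc, hlow⟩, fun ⟨c, hc, hlow⟩ =>
    ⟨c, ρ (e 0), hc, ?_, hlow, fun n => hgen.seminorm_sum_le hδ⟩⟩
  simpa using hlow 1 1

end GeneratedModel

theorem statement12_general {X : Type*} [NormedAddCommGroup X] [NormedSpace ℝ X]
    (k : ℕ) (x x' : (Fin k → ℕ) → X) (x₀ : X)
    (hx' : ∀ s : Fin k → ℕ, x' s = x s - x₀)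
    {E E' : Type*} [AddCommGroup E] [Module ℝ E] [AddCommGroup E'] [Module ℝ E']
    (ρ : Seminorm ℝ E) (ρ' : Seminorm ℝ E') (e : ℕ → E) (e' : ℕ → E')
    (δ δ' : ℕ → ℝ) (hδ : IsNullPos δ) (hδ' : IsNullPos δ')
    (hgen : Generates ρ x (fun n => n) e δ)
    (hgen' : Generates ρ' x' (fun n => n) e' δ') :
    (∀ (n : ℕ) (a : Fin n → ℝ), ∑ i, a i = 0 →
      ρ (∑ i, a i • e (i : ℕ)) = ρ' (∑ i, a i • e' (i : ℕ))) ∧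
    (EquivL1Basis ρ e ↔ EquivL1Basis ρ' e') := by
  have heq : ∀ (n : ℕ) (a : Fin n → ℝ), ∑ i, a i = 0 →
      ρ (∑ i, a i • e i) = ρ' (∑ i, a i • e' i) := fun _ _ ha =>
    seminorm_sum_eq_of_sum_eq_zero hgen hgen' hx' hδ.2 hδ'.2 ha
  refine ⟨heq, ?_⟩
  rw [hgen.equivL1Basis_iff hδ.2, hgen'.equivL1Basis_iff hδ'.2]
  exact exists_congr fun c => and_congr_right fun _ =>
    ⟨LowerL1.of_seminorm_eq_of_sum_eq_zero hgen' hδ'.2 fun n a ha => (heq n a ha).symm,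
      LowerL1.of_seminorm_eq_of_sum_eq_zero hgen hδ.2 heq⟩

/-- Suppose `x` and `x' = x - x₀` generate the `k`-spreading models
`(e n)` and `(e' n)` respectively (with `M = ℕ`). Then (a) the two models assign equal
seminorms to all linear combinations whose coefficients sum to zero, and (c) one is
equivalent to the usual basis of `ℓ¹` iff the other is. -/
theorem statement12 {X : Type*} [NormedAddCommGroup X] [NormedSpace ℝ X] [CompleteSpace X]
    (k : ℕ) (hk : 0 < k) (x x' : (Fin k → ℕ) → X) (x₀ : X)
    (hx' : ∀ s : Fin k → ℕ, x' s = x s - x₀)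
    {E E' : Type*} [AddCommGroup E] [Module ℝ E] [AddCommGroup E'] [Module ℝ E']
    (ρ : Seminorm ℝ E) (ρ' : Seminorm ℝ E') (e : ℕ → E) (e' : ℕ → E')
    (δ δ' : ℕ → ℝ) (hδ : IsNullPos δ) (hδ' : IsNullPos δ')
    (hgen : Generates ρ x (fun n => n) e δ)
    (hgen' : Generates ρ' x' (fun n => n) e' δ') :
    (∀ (n : ℕ) (a : Fin n → ℝ), ∑ i, a i = 0 →
      ρ (∑ i, a i • e (i : ℕ)) = ρ' (∑ i, a i • e' (i : ℕ))) ∧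
    (EquivL1Basis ρ e ↔ EquivL1Basis ρ' e') :=
  statement12_general k x x' x₀ hx' ρ ρ' e e' δ δ' hδ hδ' hgen hgen'
end

section
/- Let (E, ‖·‖_∘), (E_1, ‖·‖_*), (E_2, ‖·‖_{**}) be seminormed linear spaces and (e_n)_n, (e_n^1)_n, (e_n^2)_n be spreading sequences in E, E_1 and E_2 respectively. Assume that ‖Σ_{i=1}^n a_i e_i‖_∘ ≤ ‖Σ_{i=1}^n a_i e_i^1‖_* + ‖Σ_{i=1}^n a_i e_i^2‖_{**} for every n ∈ ℕ and a_1, …, a_n ∈ ℝ. If (e_n)_n admits a lower ℓ^1-estimate of constant c > 0 and (e_n^2)_n does not admit a lower ℓ^1-estimate of any constant, then (e_n^1)_n admits a lower ℓ^1-estimate of the same constant c. -/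
/-!
Fix `a` and let `b` be coefficients with `∑ |b_j| = 1` and `ρ₂ (∑ b_j e²_j) < ε`, which exist
because `(e²_n)` has no lower `ℓ¹`-estimate. Consider the vector with coefficients `b_j a_i`
placed at position `i + n j` (the tensor product `b ⊗ a`); its `ℓ¹`-norm is `∑ |a_i|`.
Read as `N` consecutive blocks of `a`, spreading of `(e¹_n)` and the triangle inequality bound
its `ρ₁`-seminorm by `ρ₁ (∑ a_i e¹_i)`; read as `n` interleaved copies of `b`, spreading of
`(e²_n)` bounds its `ρ₂`-seminorm by `ε ∑ |a_i|`. Hence `c ∑ |a_i| ≤ ρ₁ (∑ a_i e¹_i) + ε ∑ |a_i|`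
for every `ε > 0`.
-/

open Finset

section

variable {E : Type*} [AddCommGroup E] [Module ℝ E]

lemma Seminorm.map_sum_le (ρ : Seminorm ℝ E) {ι : Type*} (s : Finset ι) (g : ι → E) :
    ρ (∑ i ∈ s, g i) ≤ ∑ i ∈ s, ρ (g i) :=
  le_sum_of_subadditive ρ (map_zero ρ).le (map_add_le_add ρ) s g

lemma exists_sum_abs_eq_one_lt_of_not_lowerL1 {ρ : Seminorm ℝ E} {e : ℕ → E}
    (h : ¬ ∃ c : ℝ, 0 < c ∧ LowerL1 ρ e c) {ε : ℝ} (hε : 0 < ε) :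
    ∃ (N : ℕ) (b : Fin N → ℝ), ∑ j, |b j| = 1 ∧ ρ (∑ j, b j • e j) < ε := by
  by_contra! hbig
  refine h ⟨ε, hε, fun N b => ?_⟩
  set S := ∑ j, |b j|
  rcases (show 0 ≤ S by positivity).eq_or_lt with hS | hS
  · rw [← hS, mul_zero]
    exact apply_nonneg ρ _
  have hnormed : ∑ j, |b j / S| = 1 := by
    rw [← div_self hS.ne']
    simp only [abs_div, abs_of_pos hS, ← sum_div, S]
  have hsmul : ∑ j, (b j / S) • e j = S⁻¹ • ∑ j, b j • e j := by
    simp only [smul_sum, smul_smul, div_eq_inv_mul]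
  have := hbig N (fun j => b j / S) hnormed
  rw [hsmul, map_smul_eq_mul, Real.norm_eq_abs, abs_of_pos (inv_pos.mpr hS),
    le_inv_mul_iff₀ hS] at this
  linarith

/-- The coefficients of `b ⊗ a`, with `b j * a i` at position `i + n * j`. -/
def tensorCoeff {N n : ℕ} (b : Fin N → ℝ) (a : Fin n → ℝ) (k : Fin (N * n)) : ℝ :=
  b (finProdFinEquiv.symm k).1 * a (finProdFinEquiv.symm k).2

lemma sum_abs_tensorCoeff {N n : ℕ} (b : Fin N → ℝ) (a : Fin n → ℝ) :
    ∑ k, |tensorCoeff b a k| = (∑ j, |b j|) * ∑ i, |a i| := by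
  rw [← finProdFinEquiv.sum_comp, Fintype.sum_prod_type, sum_mul_sum]
  simp [tensorCoeff, abs_mul]

lemma sum_tensorCoeff_smul {N n : ℕ} (b : Fin N → ℝ) (a : Fin n → ℝ) (v : ℕ → E) :
    ∑ k, tensorCoeff b a k • v k
      = ∑ p : Fin N × Fin n, (b p.1 * a p.2) • v (p.2 + n * p.1) := by
  rw [← finProdFinEquiv.sum_comp]
  simp only [tensorCoeff, Equiv.symm_apply_apply]
  rfl

variable {ρ : Seminorm ℝ E} {v : ℕ → E}

lemma map_sum_tensorCoeff_le_blocks (hv : IsSpreadingWith ρ v) {N n : ℕ}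
    (b : Fin N → ℝ) (a : Fin n → ℝ) :
    ρ (∑ k, tensorCoeff b a k • v k) ≤ (∑ j, |b j|) * ρ (∑ i, a i • v i) := by
  have hblock : ∀ j : Fin N, ρ (b j • ∑ i, a i • v (i + n * j)) = |b j| * ρ (∑ i, a i • v i) :=
    fun j => by
      rw [map_smul_eq_mul, Real.norm_eq_abs,
        hv n a (fun i => i + n * j) fun i i' h => by simpa using h]
  calc ρ (∑ k, tensorCoeff b a k • v k)
      = ρ (∑ j, b j • ∑ i, a i • v (i + n * j)) := by
        simp only [sum_tensorCoeff_smul, Fintype.sum_prod_type, smul_sum, smul_smul]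
    _ ≤ ∑ j, ρ (b j • ∑ i, a i • v (i + n * j)) := ρ.map_sum_le _ _
    _ = (∑ j, |b j|) * ρ (∑ i, a i • v i) := by simp only [hblock, sum_mul]

lemma map_sum_tensorCoeff_le_interleaved (hv : IsSpreadingWith ρ v) {N n : ℕ}
    (b : Fin N → ℝ) (a : Fin n → ℝ) :
    ρ (∑ k, tensorCoeff b a k • v k) ≤ (∑ i, |a i|) * ρ (∑ j, b j • v j) := by
  have hcopy : ∀ i : Fin n, ρ (a i • ∑ j, b j • v (i + n * j)) = |a i| * ρ (∑ j, b j • v j) :=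
    fun i => by
      have hmono : StrictMono fun j : Fin N => (i : ℕ) + n * j := fun j j' h =>
        Nat.add_lt_add_left (Nat.mul_lt_mul_of_pos_left h i.pos) _
      rw [map_smul_eq_mul, Real.norm_eq_abs, hv N b _ hmono]
  calc ρ (∑ k, tensorCoeff b a k • v k)
      = ρ (∑ i, a i • ∑ j, b j • v (i + n * j)) := by
        simp only [sum_tensorCoeff_smul, Fintype.sum_prod_type_right, smul_sum, smul_smul,
          mul_comm]
    _ ≤ ∑ i, ρ (a i • ∑ j, b j • v (i + n * j)) := ρ.map_sum_le _ _
    _ = (∑ i, |a i|) * ρ (∑ j, b j • v j) := by simp only [hcopy, sum_mul]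

end

lemma le_of_forall_pos_le_add_mul {x y A : ℝ} (hA : 0 ≤ A) (h : ∀ ε > 0, x ≤ y + ε * A) :
    x ≤ y := by
  rcases hA.eq_or_lt with rfl | hA
  · simpa using h 1 one_pos
  refine le_of_forall_pos_le_add fun η hη => ?_
  simpa [div_mul_cancel₀ η hA.ne'] using h (η / A) (div_pos hη hA)

theorem statement13_general {E E₁ E₂ : Type*} [AddCommGroup E] [Module ℝ E]
    [AddCommGroup E₁] [Module ℝ E₁] [AddCommGroup E₂] [Module ℝ E₂]
    (ρ : Seminorm ℝ E) (ρ₁ : Seminorm ℝ E₁) (ρ₂ : Seminorm ℝ E₂)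
    (e : ℕ → E) (e₁ : ℕ → E₁) (e₂ : ℕ → E₂)
    (hs₁ : IsSpreadingWith ρ₁ e₁)
    (hs₂ : IsSpreadingWith ρ₂ e₂)
    (hineq : ∀ (n : ℕ) (a : Fin n → ℝ),
      ρ (∑ i, a i • e (i : ℕ)) ≤ ρ₁ (∑ i, a i • e₁ (i : ℕ)) + ρ₂ (∑ i, a i • e₂ (i : ℕ)))
    (c : ℝ) (hlow : LowerL1 ρ e c)
    (hnot : ¬ ∃ c' : ℝ, 0 < c' ∧ LowerL1 ρ₂ e₂ c') :
    LowerL1 ρ₁ e₁ c := by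
  intro n a
  refine le_of_forall_pos_le_add_mul (A := ∑ i, |a i|) (by positivity) fun ε hε => ?_
  obtain ⟨N, b, hb, hsmall⟩ := exists_sum_abs_eq_one_lt_of_not_lowerL1 hnot hε
  have h₁ := map_sum_tensorCoeff_le_blocks hs₁ b a
  have h₂ := map_sum_tensorCoeff_le_interleaved hs₂ b a
  rw [hb, one_mul] at h₁
  calc c * ∑ i, |a i| = c * ∑ k, |tensorCoeff b a k| := by rw [sum_abs_tensorCoeff, hb, one_mul]
    _ ≤ ρ (∑ k, tensorCoeff b a k • e k) := hlow _ _
    _ ≤ ρ₁ (∑ k, tensorCoeff b a k • e₁ k) + ρ₂ (∑ k, tensorCoeff b a k • e₂ k) := hineq _ _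
    _ ≤ ρ₁ (∑ i, a i • e₁ i) + (∑ i, |a i|) * ε := by
        gcongr
        exact h₂.trans (by gcongr)
    _ = ρ₁ (∑ i, a i • e₁ i) + ε * ∑ i, |a i| := by rw [mul_comm]

/-- If the spreading sequences `(e n)`, `(e₁ n)`, `(e₂ n)` in
seminormed spaces satisfy `ρ (∑ aᵢ • eᵢ) ≤ ρ₁ (∑ aᵢ • e₁ᵢ) + ρ₂ (∑ aᵢ • e₂ᵢ)`, `(e n)`
admits a lower `ℓ¹`-estimate of constant `c > 0` and `(e₂ n)` admits no lower
`ℓ¹`-estimate, then `(e₁ n)` admits a lower `ℓ¹`-estimate of the same constant `c`. -/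
theorem statement13 {E E₁ E₂ : Type*} [AddCommGroup E] [Module ℝ E]
    [AddCommGroup E₁] [Module ℝ E₁] [AddCommGroup E₂] [Module ℝ E₂]
    (ρ : Seminorm ℝ E) (ρ₁ : Seminorm ℝ E₁) (ρ₂ : Seminorm ℝ E₂)
    (e : ℕ → E) (e₁ : ℕ → E₁) (e₂ : ℕ → E₂)
    (hs : IsSpreadingWith ρ e) (hs₁ : IsSpreadingWith ρ₁ e₁)
    (hs₂ : IsSpreadingWith ρ₂ e₂)
    (hineq : ∀ (n : ℕ) (a : Fin n → ℝ),
      ρ (∑ i, a i • e (i : ℕ)) ≤ ρ₁ (∑ i, a i • e₁ (i : ℕ)) + ρ₂ (∑ i, a i • e₂ (i : ℕ)))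
    (c : ℝ) (hc : 0 < c) (hlow : LowerL1 ρ e c)
    (hnot : ¬ ∃ c' : ℝ, 0 < c' ∧ LowerL1 ρ₂ e₂ c') :
    LowerL1 ρ₁ e₁ c :=
  statement13_general ρ ρ₁ ρ₂ e e₁ e₂ hs₁ hs₂ hineq c hlow hnot
end

section
/- Let k ∈ ℕ and (x_s)_{s∈[ℕ]^k}, (x_s^1)_{s∈[ℕ]^k}, (x_s^2)_{s∈[ℕ]^k} be three k-sequences in a Banach space X with x_s = x_s^1 + x_s^2 for all s ∈ [ℕ]^k. Assume that (x_s)_{s∈[ℕ]^k}, (x_s^1)_{s∈[ℕ]^k} and (x_s^2)_{s∈[ℕ]^k} generate k-spreading models (e_n)_n, (e_n^1)_n and (e_n^2)_n respectively (each with M = ℕ and some null sequence of positive reals). If (e_n)_n admits a lower ℓ^1-estimate of constant c > 0 and (e_n^2)_n does not admit a lower ℓ^1-estimate of any constant, then (e_n^1)_n admits a lower ℓ^1-estimate of constant c. -/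
lemma aux_plegma (L N : ℕ) {k l : ℕ} (g : Fin l → ℕ) (hg : StrictMono g)
    (hgN : ∀ r, g r < N) :
    IsPlegma (Set.range (fun n : ℕ => n))
      (fun (r : Fin l) (t : Fin k) => L + (t : ℕ) * N + g r) := by
  refine ⟨fun r => ⟨?_, fun t => ⟨_, rfl⟩⟩, fun t => ?_, fun t ht j j' => ?_⟩
  · intro t t' h
    have hc : (t:ℕ) < (t':ℕ) := h
    have h1 : ((t:ℕ)+1) * N ≤ (t':ℕ) * N := Nat.mul_le_mul_right N hc
    have h2 : ((t:ℕ)+1) * N = (t:ℕ) * N + N := by ring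
    have := hgN r
    simp only []
    omega
  · intro j j' h
    have := hg h
    simp only []
    omega
  · have h2 : ((t:ℕ)+1) * N = (t:ℕ) * N + N := by ring
    have := hgN j
    show L + (t:ℕ) * N + g j < L + ((⟨(t:ℕ)+1, ht⟩ : Fin k) : ℕ) * N + g j'
    simp only [Fin.val_mk]
    omega

lemma aux_sum_split {β : Type*} [AddCommMonoid β] (m' m : ℕ) (F : ℕ → β) :
    ∑ r : Fin (m' * (m+1) + m + 1), F (r : ℕ)
      = ∑ i : Fin (m'+1), ∑ j : Fin (m+1), F ((i:ℕ) * (m+1) + (j:ℕ)) := by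
  have h : (m'+1) * (m+1) = m' * (m+1) + m + 1 := by ring
  rw [← Equiv.sum_comp (finCongr h) (fun r : Fin (m' * (m+1) + m + 1) => F (r:ℕ))]
  rw [← Equiv.sum_comp (finProdFinEquiv (m := m'+1) (n := m+1))
    (fun r : Fin ((m'+1)*(m+1)) => F ((finCongr h r : ℕ)))]
  rw [Fintype.sum_prod_type]
  refine Finset.sum_congr rfl fun i _ => Finset.sum_congr rfl fun j _ => ?_
  simp [finProdFinEquiv, finCongr]
  ring_nf

lemma aux_normalize {E : Type*} [AddCommGroup E] [Module ℝ E] (ρ : Seminorm ℝ E)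
    (e : ℕ → E) (c : ℝ) (h : ¬ LowerL1 ρ e c) :
    ∃ (m : ℕ) (a : Fin (m+1) → ℝ), (∑ i, |a i|) = 1 ∧ (∀ i, a i ∈ Set.Icc (-1:ℝ) 1) ∧
      ρ (∑ i, a i • e (i : ℕ)) < c := by
  unfold LowerL1 at h
  push_neg at h
  obtain ⟨n, a, ha⟩ := h
  set S := ∑ i, |a i| with hSdef
  have hρ0 : (0:ℝ) ≤ ρ (∑ i, a i • e (i : ℕ)) := apply_nonneg ρ _
  have hS0 : 0 ≤ S := Finset.sum_nonneg fun i _ => abs_nonneg _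
  have hS : 0 < S := by
    rcases hS0.lt_or_eq with h' | h'
    · exact h'
    · exfalso; rw [← h'] at ha; simp at ha; linarith
  obtain ⟨m, rfl⟩ : ∃ m, n = m + 1 := by
    refine ⟨n - 1, ?_⟩
    rcases Nat.eq_zero_or_pos n with h' | h'
    · subst h'; simp [hSdef] at hS
    · omega
  refine ⟨m, fun i => a i / S, ?_, ?_, ?_⟩
  · have : ∀ i : Fin (m+1), |a i / S| = |a i| / S := by
      intro i; rw [abs_div, abs_of_pos hS]
    rw [Finset.sum_congr rfl (fun i _ => this i), ← Finset.sum_div, div_self hS.ne']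
  · intro i
    have h1 : |a i| ≤ S := Finset.single_le_sum (fun j _ => abs_nonneg (a j)) (Finset.mem_univ i)
    have : |a i / S| ≤ 1 := by
      rw [abs_div, abs_of_pos hS, div_le_one hS]; exact h1
    exact abs_le.mp this
  · have heq : (∑ i, (a i / S) • e (i : ℕ)) = S⁻¹ • ∑ i, a i • e (i : ℕ) := by
      rw [Finset.smul_sum]
      refine Finset.sum_congr rfl fun i _ => ?_
      rw [smul_smul, div_eq_inv_mul]
    rw [heq, map_smul_eq_mul, Real.norm_eq_abs, abs_of_pos (inv_pos.mpr hS)]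
    calc S⁻¹ * ρ (∑ i, a i • e (i : ℕ)) < S⁻¹ * (c * S) := by
          exact mul_lt_mul_of_pos_left ha (inv_pos.mpr hS)
      _ = c := by field_simp

lemma aux_norm_bound {X : Type*} [SeminormedAddCommGroup X] [NormedSpace ℝ X]
    {n : ℕ} (cf : Fin n → ℝ) (v : Fin n → X) (C : ℝ)
    (hcf : ∑ i, |cf i| = 1) (hv : ∀ i, ‖v i‖ ≤ C) :
    ‖∑ i, cf i • v i‖ ≤ C := by
  calc ‖∑ i, cf i • v i‖ ≤ ∑ i, ‖cf i • v i‖ := norm_sum_le _ _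
    _ = ∑ i, |cf i| * ‖v i‖ := by
        refine Finset.sum_congr rfl fun i _ => ?_
        rw [norm_smul, Real.norm_eq_abs]
    _ ≤ ∑ i, |cf i| * C := Finset.sum_le_sum fun i _ =>
        mul_le_mul_of_nonneg_left (hv i) (abs_nonneg _)
    _ = (∑ i, |cf i|) * C := (Finset.sum_mul _ _ _).symm
    _ = C := by rw [hcf, one_mul]


/-- Let `x = x¹ + x²` be `k`-sequences in a Banach space generating
(with `M = ℕ`) the `k`-spreading models `(e n)`, `(e¹ n)`, `(e² n)` respectively. If
`(e n)` admits a lower `ℓ¹`-estimate of constant `c > 0` and `(e² n)` admits no lower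
`ℓ¹`-estimate, then `(e¹ n)` admits a lower `ℓ¹`-estimate of constant `c`. -/
theorem statement14 {X : Type*} [NormedAddCommGroup X] [NormedSpace ℝ X] [CompleteSpace X]
    (k : ℕ) (hk : 0 < k) (x x₁ x₂ : (Fin k → ℕ) → X)
    (hsum : ∀ s : Fin k → ℕ, x s = x₁ s + x₂ s)
    {E E₁ E₂ : Type*} [AddCommGroup E] [Module ℝ E]
    [AddCommGroup E₁] [Module ℝ E₁] [AddCommGroup E₂] [Module ℝ E₂]
    (ρ : Seminorm ℝ E) (ρ₁ : Seminorm ℝ E₁) (ρ₂ : Seminorm ℝ E₂)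
    (e : ℕ → E) (e₁ : ℕ → E₁) (e₂ : ℕ → E₂) (δ δ₁ δ₂ : ℕ → ℝ)
    (hδ : IsNullPos δ) (hδ₁ : IsNullPos δ₁) (hδ₂ : IsNullPos δ₂)
    (hgen : Generates ρ x (fun n => n) e δ)
    (hgen₁ : Generates ρ₁ x₁ (fun n => n) e₁ δ₁)
    (hgen₂ : Generates ρ₂ x₂ (fun n => n) e₂ δ₂)
    (c : ℝ) (hc : 0 < c) (hlow : LowerL1 ρ e c)
    (hnot : ¬ ∃ c' : ℝ, 0 < c' ∧ LowerL1 ρ₂ e₂ c') :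
    LowerL1 ρ₁ e₁ c := by
  by_contra h
  obtain ⟨m, a, haS, haI, haρ⟩ := aux_normalize ρ₁ e₁ c h
  set ρ₁v := ρ₁ (∑ i, a i • e₁ (i : ℕ)) with hρ₁v
  set ε := c - ρ₁v with hε
  have hεpos : 0 < ε := by rw [hε]; linarith
  push_neg at hnot
  have h2 : ¬ LowerL1 ρ₂ e₂ (ε/4) := hnot (ε/4) (by positivity)
  obtain ⟨m', b, hbS, hbI, hbρ⟩ := aux_normalize ρ₂ e₂ (ε/4) h2
  set ρ₂v := ρ₂ (∑ i, b i • e₂ (i : ℕ)) with hρ₂v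
  -- choose the level L
  have h4 : (0:ℝ) < ε/4 := by positivity
  obtain ⟨L, ⟨⟨⟨hdL, hd1L⟩, hd2L⟩, hKL⟩⟩ :=
    ((((hδ.2.eventually_lt_const h4).and (hδ₁.2.eventually_lt_const h4)).and
      (hδ₂.2.eventually_lt_const h4)).and
      (Filter.eventually_ge_atTop (m' * (m+1) + m))).exists
  set N := m' * (m+1) + m + 1 with hN
  have hmL : m ≤ L := by omega
  have hm'L : m' ≤ L := by nlinarith
  -- extended coefficient functions
  set aa : ℕ → ℝ := fun n => a ⟨n % (m+1), Nat.mod_lt _ (Nat.succ_pos m)⟩ with haa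
  set bb : ℕ → ℝ := fun n => b ⟨n % (m'+1), Nat.mod_lt _ (Nat.succ_pos m')⟩ with hbb
  set A : ℕ → ℝ := fun rv => bb (rv / (m+1)) * aa rv with hA
  have haa_eq : ∀ (n : ℕ) (j' : Fin (m+1)), n % (m+1) = (j':ℕ) → aa n = a j' := by
    intro n j' hj; simp only [haa]; congr 1; exact Fin.ext hj
  have hbb_eq : ∀ (n : ℕ) (i' : Fin (m'+1)), n % (m'+1) = (i':ℕ) → bb n = b i' := by
    intro n i' hi; simp only [hbb]; congr 1; exact Fin.ext hi
  have hAij : ∀ (i : Fin (m'+1)) (j : Fin (m+1)), A ((i:ℕ) * (m+1) + (j:ℕ)) = b i * a j := by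
    intro i j
    have hdiv : ((i:ℕ) * (m+1) + (j:ℕ)) / (m+1) = (i:ℕ) := by
      rw [Nat.mul_comm, Nat.mul_add_div (Nat.succ_pos m), Nat.div_eq_of_lt j.isLt, Nat.add_zero]
    have h1 : aa ((i:ℕ) * (m+1) + (j:ℕ)) = a j := haa_eq _ j
      (by rw [Nat.mul_comm, Nat.mul_add_mod, Nat.mod_eq_of_lt j.isLt])
    have h2 : bb (((i:ℕ) * (m+1) + (j:ℕ)) / (m+1)) = b i := hbb_eq _ i
      (by rw [hdiv, Nat.mod_eq_of_lt i.isLt])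
    simp only [hA]
    rw [h1, h2]
  have habs_a : ∀ j, |a j| ≤ 1 := fun j => abs_le.mpr ⟨(haI j).1, (haI j).2⟩
  have habs_b : ∀ i, |b i| ≤ 1 := fun i => abs_le.mpr ⟨(hbI i).1, (hbI i).2⟩
  have hAIcc : ∀ r : Fin N, A (r:ℕ) ∈ Set.Icc (-1:ℝ) 1 := by
    intro r
    have h1 : |A (r:ℕ)| ≤ 1 := by
      rw [hA]; simp only []
      rw [abs_mul]
      have := habs_b (⟨(r:ℕ) / (m+1) % (m'+1), Nat.mod_lt _ (Nat.succ_pos m')⟩ : Fin (m'+1))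
      have := habs_a (⟨(r:ℕ) % (m+1), Nat.mod_lt _ (Nat.succ_pos m)⟩ : Fin (m+1))
      nlinarith [abs_nonneg (bb ((r:ℕ)/(m+1))), abs_nonneg (aa (r:ℕ))]
    exact Set.mem_Icc.mpr (abs_le.mp h1)
  -- the three plegma families and generate-estimates
  -- full family
  have hplegma : IsPlegma (Set.range (fun n : ℕ => n))
      (fun (r : Fin N) (t : Fin k) => L + (t:ℕ) * N + (r:ℕ)) :=
    aux_plegma L N (fun r => (r:ℕ)) (fun _ _ h => h) (fun r => r.isLt)
  have hfull := hgen (m' * (m+1) + m) L hKL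
      (fun (r : Fin N) (t : Fin k) => L + (t:ℕ) * N + (r:ℕ)) hplegma
      (fun r t => by show L ≤ L + (t:ℕ) * N + (r:ℕ); omega)
      (fun r => A (r:ℕ)) hAIcc
  -- row estimates
  have hrow : ∀ i : Fin (m'+1),
      ‖∑ j : Fin (m+1), a j • x₁ (fun t : Fin k => L + (t:ℕ) * N + ((i:ℕ) * (m+1) + (j:ℕ)))‖
        ≤ ρ₁v + δ₁ L := by
    intro i
    have hgbound : ∀ j : Fin (m+1), (i:ℕ) * (m+1) + (j:ℕ) < N := by
      intro j
      have h1 : (i:ℕ) ≤ m' := Nat.lt_succ_iff.mp i.isLt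
      have h2 : (i:ℕ) * (m+1) ≤ m' * (m+1) := Nat.mul_le_mul_right _ h1
      have := j.isLt
      omega
    have hpl : IsPlegma (Set.range (fun n : ℕ => n))
        (fun (j : Fin (m+1)) (t : Fin k) => L + (t:ℕ) * N + ((i:ℕ) * (m+1) + (j:ℕ))) :=
      aux_plegma L N (fun j => (i:ℕ) * (m+1) + (j:ℕ))
        (fun j j' h => by
          have : (j:ℕ) < (j':ℕ) := h
          show (i:ℕ) * (m+1) + (j:ℕ) < (i:ℕ) * (m+1) + (j':ℕ)
          omega) hgbound
    have := hgen₁ m L hmL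
        (fun (j : Fin (m+1)) (t : Fin k) => L + (t:ℕ) * N + ((i:ℕ) * (m+1) + (j:ℕ))) hpl
        (fun j t => by show L ≤ L + (t:ℕ) * N + ((i:ℕ) * (m+1) + (j:ℕ)); omega) a haI
    rw [abs_sub_le_iff] at this
    linarith [this.1]
  -- column estimates
  have hcol : ∀ j : Fin (m+1),
      ‖∑ i : Fin (m'+1), b i • x₂ (fun t : Fin k => L + (t:ℕ) * N + ((i:ℕ) * (m+1) + (j:ℕ)))‖
        ≤ ρ₂v + δ₂ L := by
    intro j
    have hgbound : ∀ i : Fin (m'+1), (i:ℕ) * (m+1) + (j:ℕ) < N := by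
      intro i
      have h1 : (i:ℕ) ≤ m' := Nat.lt_succ_iff.mp i.isLt
      have h2 : (i:ℕ) * (m+1) ≤ m' * (m+1) := Nat.mul_le_mul_right _ h1
      have := j.isLt
      omega
    have hpl : IsPlegma (Set.range (fun n : ℕ => n))
        (fun (i : Fin (m'+1)) (t : Fin k) => L + (t:ℕ) * N + ((i:ℕ) * (m+1) + (j:ℕ))) :=
      aux_plegma L N (fun i => (i:ℕ) * (m+1) + (j:ℕ))
        (fun i i' h => by
          have hc' : (i:ℕ) < (i':ℕ) := h
          have h1 : ((i:ℕ)+1) * (m+1) ≤ (i':ℕ) * (m+1) := Nat.mul_le_mul_right _ hc'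
          have h2 : ((i:ℕ)+1) * (m+1) = (i:ℕ) * (m+1) + (m+1) := by ring
          show (i:ℕ) * (m+1) + (j:ℕ) < (i':ℕ) * (m+1) + (j:ℕ)
          omega) hgbound
    have := hgen₂ m' L hm'L
        (fun (i : Fin (m'+1)) (t : Fin k) => L + (t:ℕ) * N + ((i:ℕ) * (m+1) + (j:ℕ))) hpl
        (fun i t => by show L ≤ L + (t:ℕ) * N + ((i:ℕ) * (m+1) + (j:ℕ)); omega) b hbI
    rw [abs_sub_le_iff] at this
    linarith [this.1]
  -- sum of absolute values of A is 1
  have hAsum : ∑ r : Fin N, |A (r:ℕ)| = 1 := by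
    rw [aux_sum_split m' m (fun rv => |A rv|)]
    have : ∀ i : Fin (m'+1), ∑ j : Fin (m+1), |A ((i:ℕ) * (m+1) + (j:ℕ))| = |b i| := by
      intro i
      calc ∑ j : Fin (m+1), |A ((i:ℕ) * (m+1) + (j:ℕ))|
          = ∑ j : Fin (m+1), |b i| * |a j| := by
            refine Finset.sum_congr rfl fun j _ => ?_
            rw [hAij i j, abs_mul]
        _ = |b i| * ∑ j, |a j| := by rw [Finset.mul_sum]
        _ = |b i| := by rw [haS, mul_one]
    rw [Finset.sum_congr rfl (fun i _ => this i), hbS]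
  -- lower estimate for the full combination
  have hρfull : c ≤ ρ (∑ r : Fin N, A (r:ℕ) • e (r:ℕ)) := by
    have := hlow N (fun r => A (r:ℕ))
    rw [hAsum, mul_one] at this
    exact this
  -- splitting the full vector
  have hsplit : ∑ r : Fin N, A (r:ℕ) • x (fun t : Fin k => L + (t:ℕ) * N + (r:ℕ))
      = (∑ i : Fin (m'+1), b i • ∑ j : Fin (m+1),
          a j • x₁ (fun t : Fin k => L + (t:ℕ) * N + ((i:ℕ) * (m+1) + (j:ℕ))))
      + (∑ j : Fin (m+1), a j • ∑ i : Fin (m'+1),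
          b i • x₂ (fun t : Fin k => L + (t:ℕ) * N + ((i:ℕ) * (m+1) + (j:ℕ)))) := by
    have e1 : ∑ r : Fin N, A (r:ℕ) • x (fun t : Fin k => L + (t:ℕ) * N + (r:ℕ))
        = (∑ r : Fin N, A (r:ℕ) • x₁ (fun t : Fin k => L + (t:ℕ) * N + (r:ℕ)))
        + (∑ r : Fin N, A (r:ℕ) • x₂ (fun t : Fin k => L + (t:ℕ) * N + (r:ℕ))) := by
      rw [← Finset.sum_add_distrib]
      refine Finset.sum_congr rfl fun r _ => ?_
      rw [hsum, smul_add]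
    rw [e1]
    congr 1
    · rw [aux_sum_split m' m
        (fun rv => A rv • x₁ (fun t : Fin k => L + (t:ℕ) * N + rv))]
      refine Finset.sum_congr rfl fun i _ => ?_
      rw [Finset.smul_sum]
      refine Finset.sum_congr rfl fun j _ => ?_
      rw [hAij i j, mul_smul]
    · rw [aux_sum_split m' m
        (fun rv => A rv • x₂ (fun t : Fin k => L + (t:ℕ) * N + rv))]
      rw [Finset.sum_comm]
      refine Finset.sum_congr rfl fun j _ => ?_
      rw [Finset.smul_sum]
      refine Finset.sum_congr rfl fun i _ => ?_
      rw [hAij i j, mul_comm, mul_smul]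
  -- norm bound on the full vector
  have hnorm : ‖∑ r : Fin N, A (r:ℕ) • x (fun t : Fin k => L + (t:ℕ) * N + (r:ℕ))‖
      ≤ (ρ₁v + δ₁ L) + (ρ₂v + δ₂ L) := by
    rw [hsplit]
    refine (norm_add_le _ _).trans (add_le_add ?_ ?_)
    · exact aux_norm_bound b _ _ hbS hrow
    · exact aux_norm_bound a _ _ haS hcol
  rw [abs_sub_le_iff] at hfull
  have hfinal := hfull.2
  have : c < c := by
    have h5 : ρ₂v < ε/4 := hbρ
    have h6 : ρ₁v = c - ε := by rw [hε]; ring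
    linarith
  exact lt_irrefl c this
end
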